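/- arXiv:2005.05609 — 5 statements merged into one kernel-verified Lean document; each statement's English description precedes it below -/
import Mathlib

section
/- Let 0 < α < 1 and β > 0, and let x₁, x₂ ∈ L^∞([a,b],ℝⁿ). Then the fractional integration-by-parts identity ∫_a^b ((b−t)^{β−1}/Γ(β)) ( ∫_a^t ((t−s)^{−α}/Γ(1−α)) x₁(s) ds ) · x₂(t) dt = ∫_a^b x₁(t) · ( ∫_t^b ((s−t)^{−α}/Γ(1−α)) ((b−s)^{β−1}/Γ(β)) x₂(s) ds ) dt holds, i.e. I^β_{a+}[ I^{1−α}_{a+}[x₁] · x₂ ](b) = I^1_{a+}[ x₁ · I^{1−α}_{b−}[ ((b−·)^{β−1}/Γ(β)) x₂ ] ](b). -/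
open MeasureTheory Set
open scoped RealInnerProductSpace

/-- Beta-type integrability: `(t-s)^p * (b-t)^q` is interval integrable on `[s,b]`
for `p, q > -1`. -/
lemma beta_int_aux {p q : ℝ} (hp : -1 < p) (hq : -1 < q) {s b : ℝ} (hsb : s ≤ b) :
    IntervalIntegrable (fun t => (t - s) ^ p * (b - t) ^ q) volume s b := by
  rcases eq_or_lt_of_le hsb with rfl | hlt
  · exact IntervalIntegrable.refl
  set m := (s + b) / 2 with hm
  have hsm : s ≤ m := by simp only [hm]; linarith
  have hmb : m ≤ b := by simp only [hm]; linarith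
  have hmltb : m < b := by simp only [hm]; linarith
  have hsltm : s < m := by simp only [hm]; linarith
  have h₁ : IntervalIntegrable (fun t => (t - s) ^ p) volume s m := by
    have := (intervalIntegral.intervalIntegrable_rpow' (a := 0) (b := m - s) hp).comp_sub_right s
    simpa using this
  have hcont₁ : ContinuousOn (fun t => (b - t) ^ q) (Set.uIcc s m) := by
    apply ContinuousOn.rpow_const
    · exact (continuous_const.sub continuous_id).continuousOn
    · intro x hx
      rw [Set.uIcc_of_le hsm] at hx
      exact Or.inl (by intro h; nlinarith [hx.2, sub_eq_zero.mp h])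
  have left := h₁.mul_continuousOn hcont₁
  have h₂ : IntervalIntegrable (fun t => (b - t) ^ q) volume m b := by
    have := (intervalIntegral.intervalIntegrable_rpow' (a := 0) (b := b - m) hq).comp_sub_left b
    simpa using this.symm
  have hcont₂ : ContinuousOn (fun t => (t - s) ^ p) (Set.uIcc m b) := by
    apply ContinuousOn.rpow_const
    · exact (continuous_id.sub continuous_const).continuousOn
    · intro x hx
      rw [Set.uIcc_of_le hmb] at hx
      exact Or.inl (by intro h; nlinarith [hx.1, sub_eq_zero.mp h])
  have right := h₂.continuousOn_mul hcont₂
  exact left.trans right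

theorem stmt_2 (n : ℕ) (hn : 1 ≤ n) (a b : ℝ) (hab : a < b)
    (α β : ℝ) (hα0 : 0 < α) (hα1 : α < 1) (hβ : 0 < β)
    (x₁ x₂ : ℝ → EuclideanSpace ℝ (Fin n)) (hm₁ : Measurable x₁) (hm₂ : Measurable x₂)
    (C₁ C₂ : ℝ)
    (hb₁ : ∀ᵐ s ∂(volume : Measure ℝ), s ∈ Icc a b → ‖x₁ s‖ ≤ C₁)
    (hb₂ : ∀ᵐ s ∂(volume : Measure ℝ), s ∈ Icc a b → ‖x₂ s‖ ≤ C₂) :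
    (∫ t in a..b, ((b - t) ^ (β - 1) / Real.Gamma β) *
        ⟪∫ s in a..t, ((t - s) ^ (-α) / Real.Gamma (1 - α)) • x₁ s, x₂ t⟫)
      = ∫ t in a..b, ⟪x₁ t,
          ∫ s in t..b, (((s - t) ^ (-α) / Real.Gamma (1 - α)) *
            ((b - s) ^ (β - 1) / Real.Gamma β)) • x₂ s⟫ := by
  have hΓ₁ : 0 < Real.Gamma (1 - α) := Real.Gamma_pos_of_pos (by linarith)
  have hΓ₂ : 0 < Real.Gamma β := Real.Gamma_pos_of_pos hβ
  set Γ₁ := Real.Gamma (1 - α) with hΓ₁def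
  set Γ₂ := Real.Gamma β with hΓ₂def
  set D₁ := |C₁| with hD₁def
  set D₂ := |C₂| with hD₂def
  have hD₁0 : 0 ≤ D₁ := abs_nonneg _
  have hD₂0 : 0 ≤ D₂ := abs_nonneg _
  have hbd₁ : ∀ᵐ s ∂(volume : Measure ℝ), s ∈ Icc a b → ‖x₁ s‖ ≤ D₁ :=
    hb₁.mono fun s h hs => (h hs).trans (le_abs_self _)
  have hbd₂ : ∀ᵐ s ∂(volume : Measure ℝ), s ∈ Icc a b → ‖x₂ s‖ ≤ D₂ :=
    hb₂.mono fun s h hs => (h hs).trans (le_abs_self _)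
  have hα' : (-1 : ℝ) < -α := by linarith
  have hβ' : (-1 : ℝ) < β - 1 := by linarith
  -- kernel integrability in s on (a, t]
  have hKint : ∀ t : ℝ, IntegrableOn (fun s => (t - s) ^ (-α)) (Ioc a t) volume := by
    intro t
    have h := (intervalIntegral.intervalIntegrable_rpow' (a := 0) (b := t - a) hα').comp_sub_left t
    have h2 : IntervalIntegrable (fun s => (t - s) ^ (-α)) volume a t := by simpa using h.symm
    exact h2.1
  -- (A) integrability of the inner integrand of the LHS
  have hA : ∀ t ∈ Ioc a b,
      IntegrableOn (fun s => ((t - s) ^ (-α) / Γ₁) • x₁ s) (Ioc a t) volume := by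
    intro t ht
    apply Integrable.mono' (g := fun s => (D₁ / Γ₁) * (t - s) ^ (-α))
    · exact (hKint t).const_mul _
    · exact ((((measurable_const.sub measurable_id).pow_const _).div_const _).smul
        hm₁).aestronglyMeasurable.restrict
    · filter_upwards [ae_restrict_mem measurableSet_Ioc, ae_restrict_of_ae hbd₁] with s hs h1
      have hts : 0 ≤ t - s := by linarith [hs.2]
      have hsab : s ∈ Icc a b := ⟨hs.1.le, hs.2.trans ht.2⟩
      have h0 : 0 ≤ (t - s) ^ (-α) := Real.rpow_nonneg hts _
      rw [norm_smul, Real.norm_eq_abs, abs_of_nonneg (div_nonneg h0 hΓ₁.le)]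
      calc (t - s) ^ (-α) / Γ₁ * ‖x₁ s‖ ≤ (t - s) ^ (-α) / Γ₁ * D₁ :=
            mul_le_mul_of_nonneg_left (h1 hsab) (div_nonneg h0 hΓ₁.le)
        _ = (D₁ / Γ₁) * (t - s) ^ (-α) := by ring
  -- (B) integrability of the inner integrand of the RHS
  have hB : ∀ s ∈ Ioc a b,
      IntegrableOn (fun t => (((t - s) ^ (-α) / Γ₁) * ((b - t) ^ (β - 1) / Γ₂)) • x₂ t)
        (Ioc s b) volume := by
    intro s hs
    have hker : IntegrableOn (fun t => (t - s) ^ (-α) * (b - t) ^ (β - 1)) (Ioc s b) volume :=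
      (beta_int_aux hα' hβ' hs.2).1
    apply Integrable.mono'
      (g := fun t => (D₂ / (Γ₁ * Γ₂)) * ((t - s) ^ (-α) * (b - t) ^ (β - 1)))
    · exact hker.const_mul _
    · exact (((((measurable_id.sub measurable_const).pow_const _).div_const _).mul
        (((measurable_const.sub measurable_id).pow_const _).div_const _)).smul
        hm₂).aestronglyMeasurable.restrict
    · filter_upwards [ae_restrict_mem measurableSet_Ioc, ae_restrict_of_ae hbd₂] with t ht h2
      have h0a : 0 ≤ (t - s) ^ (-α) := Real.rpow_nonneg (by linarith [ht.1.le]) _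
      have h0b : 0 ≤ (b - t) ^ (β - 1) := Real.rpow_nonneg (by linarith [ht.2]) _
      have htab : t ∈ Icc a b := ⟨(hs.1.trans ht.1).le, ht.2⟩
      have hnn : 0 ≤ (t - s) ^ (-α) / Γ₁ * ((b - t) ^ (β - 1) / Γ₂) :=
        mul_nonneg (div_nonneg h0a hΓ₁.le) (div_nonneg h0b hΓ₂.le)
      rw [norm_smul, Real.norm_eq_abs, abs_of_nonneg hnn]
      calc (t - s) ^ (-α) / Γ₁ * ((b - t) ^ (β - 1) / Γ₂) * ‖x₂ t‖
          ≤ (t - s) ^ (-α) / Γ₁ * ((b - t) ^ (β - 1) / Γ₂) * D₂ :=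
            mul_le_mul_of_nonneg_left (h2 htab) hnn
        _ = (D₂ / (Γ₁ * Γ₂)) * ((t - s) ^ (-α) * (b - t) ^ (β - 1)) := by ring
  -- the two-variable scalar integrand
  set f : ℝ → ℝ → ℝ := fun t s =>
    (Ioc a t).indicator (fun s' => ((b - t) ^ (β - 1) / Γ₂) *
      (((t - s') ^ (-α) / Γ₁) * ⟪x₁ s', x₂ t⟫)) s with hfdef
  set μ : Measure ℝ := volume.restrict (Ioc a b) with hμdef
  -- measurability of the uncurried integrand
  have hFm : Measurable (Function.uncurry f) := by
    have hG : Measurable (fun p : ℝ × ℝ => ((b - p.1) ^ (β - 1) / Γ₂) *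
        (((p.1 - p.2) ^ (-α) / Γ₁) * ⟪x₁ p.2, x₂ p.1⟫)) := by
      apply Measurable.mul
      · exact ((measurable_const.sub measurable_fst).pow_const _).div_const _
      · exact (((measurable_fst.sub measurable_snd).pow_const _).div_const _).mul
          (Measurable.inner (𝕜 := ℝ) (hm₁.comp measurable_snd) (hm₂.comp measurable_fst))
    have hE : MeasurableSet {p : ℝ × ℝ | a < p.2 ∧ p.2 ≤ p.1} :=
      (measurableSet_lt measurable_const measurable_snd).inter
        (measurableSet_le measurable_snd measurable_fst)
    have : Function.uncurry f = Set.indicator {p : ℝ × ℝ | a < p.2 ∧ p.2 ≤ p.1}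
        (fun p : ℝ × ℝ => ((b - p.1) ^ (β - 1) / Γ₂) *
          (((p.1 - p.2) ^ (-α) / Γ₁) * ⟪x₁ p.2, x₂ p.1⟫)) := by
      funext p
      simp only [Function.uncurry, hfdef, Set.indicator_apply, Set.mem_Ioc, Set.mem_setOf_eq]
    rw [this]
    exact hG.indicator hE
  -- slice integrability
  have hslice : ∀ t ∈ Ioc a b, Integrable (fun s => f t s) μ := by
    intro t ht
    have hsub : Ioc a t ⊆ Ioc a b := Ioc_subset_Ioc_right ht.2
    have hint : IntegrableOn (fun s' => ((b - t) ^ (β - 1) / Γ₂) *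
        (((t - s') ^ (-α) / Γ₁) * ⟪x₁ s', x₂ t⟫)) (Ioc a t) volume := by
      apply Integrable.const_mul
      have h1 := ((hA t ht).const_inner (𝕜 := ℝ) (x₂ t))
      have : (fun s => ⟪x₂ t, ((t - s) ^ (-α) / Γ₁) • x₁ s⟫)
          = fun s => ((t - s) ^ (-α) / Γ₁) * ⟪x₁ s, x₂ t⟫ := by
        funext s
        rw [real_inner_smul_right, real_inner_comm]
      rwa [this] at h1
    have : Integrable (f t) volume := by
      rw [hfdef]
      simpa [integrable_indicator_iff measurableSet_Ioc] using hint
    exact this.restrict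
  -- bound for iterated norm integrals
  set M : ℝ := ∫ u in (0:ℝ)..(b - a), u ^ (-α) with hMdef
  have hM0 : 0 ≤ M := by
    rw [hMdef]
    apply intervalIntegral.integral_nonneg (by linarith)
    intro u hu
    exact Real.rpow_nonneg hu.1 _
  have hnormbd : ∀ t ∈ Ioc a b, ‖x₂ t‖ ≤ D₂ →
      (∫ s, ‖f t s‖ ∂μ) ≤ (D₁ * D₂ * M / (Γ₁ * Γ₂)) * (b - t) ^ (β - 1) := by
    intro t ht hx2
    have hsub : Ioc a t ⊆ Ioc a b := Ioc_subset_Ioc_right ht.2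
    have hbt : 0 ≤ (b - t) ^ (β - 1) := Real.rpow_nonneg (by linarith [ht.2]) _
    have hφint : Integrable (fun s => (Ioc a t).indicator
        (fun s' => (D₁ * D₂ / (Γ₁ * Γ₂)) * (b - t) ^ (β - 1) * (t - s') ^ (-α)) s) μ := by
      apply Integrable.restrict
      rw [integrable_indicator_iff measurableSet_Ioc]
      exact ((hKint t).const_mul _)
    have hle : (∫ s, ‖f t s‖ ∂μ) ≤ ∫ s, (Ioc a t).indicator
        (fun s' => (D₁ * D₂ / (Γ₁ * Γ₂)) * (b - t) ^ (β - 1) * (t - s') ^ (-α)) s ∂μ := by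
      apply integral_mono_ae ((hslice t ht).norm) hφint
      filter_upwards [ae_restrict_of_ae hbd₁] with s h1
      simp only [hfdef]
      by_cases hs : s ∈ Ioc a t
      · rw [Set.indicator_of_mem hs, Set.indicator_of_mem hs]
        have hts : 0 ≤ t - s := by linarith [hs.2]
        have h0 : 0 ≤ (t - s) ^ (-α) := Real.rpow_nonneg hts _
        have hsab : s ∈ Icc a b := ⟨hs.1.le, hs.2.trans ht.2⟩
        have hinner : |⟪x₁ s, x₂ t⟫| ≤ D₁ * D₂ := by
          calc |⟪x₁ s, x₂ t⟫| ≤ ‖x₁ s‖ * ‖x₂ t‖ := abs_real_inner_le_norm _ _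
            _ ≤ D₁ * D₂ := mul_le_mul (h1 hsab) hx2 (norm_nonneg _) hD₁0
        rw [Real.norm_eq_abs, abs_mul, abs_mul]
        rw [abs_of_nonneg (div_nonneg hbt hΓ₂.le), abs_of_nonneg (div_nonneg h0 hΓ₁.le)]
        calc (b - t) ^ (β - 1) / Γ₂ * ((t - s) ^ (-α) / Γ₁ * |⟪x₁ s, x₂ t⟫|)
            ≤ (b - t) ^ (β - 1) / Γ₂ * ((t - s) ^ (-α) / Γ₁ * (D₁ * D₂)) := by
              apply mul_le_mul_of_nonneg_left _ (div_nonneg hbt hΓ₂.le)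
              exact mul_le_mul_of_nonneg_left hinner (div_nonneg h0 hΓ₁.le)
          _ = D₁ * D₂ / (Γ₁ * Γ₂) * (b - t) ^ (β - 1) * (t - s) ^ (-α) := by ring
      · rw [Set.indicator_of_notMem hs, Set.indicator_of_notMem hs, norm_zero]
    have heval : (∫ s, (Ioc a t).indicator
        (fun s' => (D₁ * D₂ / (Γ₁ * Γ₂)) * (b - t) ^ (β - 1) * (t - s') ^ (-α)) s ∂μ)
        ≤ (D₁ * D₂ * M / (Γ₁ * Γ₂)) * (b - t) ^ (β - 1) := by
      rw [hμdef, integral_indicator measurableSet_Ioc, Measure.restrict_restrict measurableSet_Ioc,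
        Set.inter_eq_left.mpr hsub, integral_const_mul]
      have hval : (∫ s in Ioc a t, (t - s) ^ (-α) ∂volume) ≤ M := by
        rw [← intervalIntegral.integral_of_le ht.1.le]
        have hcs := intervalIntegral.integral_comp_sub_left (a := a) (b := t)
          (fun u : ℝ => u ^ (-α)) t
        simp only [sub_self] at hcs
        rw [hcs, hMdef]
        apply intervalIntegral.integral_mono_interval le_rfl (by linarith [ht.1]) (by linarith [ht.2])
        · filter_upwards [ae_restrict_mem measurableSet_Ioc] with u hu
          exact Real.rpow_nonneg hu.1.le _
        · exact intervalIntegral.intervalIntegrable_rpow' hα'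
      calc D₁ * D₂ / (Γ₁ * Γ₂) * (b - t) ^ (β - 1) * (∫ s in Ioc a t, (t - s) ^ (-α) ∂volume)
          ≤ D₁ * D₂ / (Γ₁ * Γ₂) * (b - t) ^ (β - 1) * M := by
            apply mul_le_mul_of_nonneg_left hval
            exact mul_nonneg (div_nonneg (mul_nonneg hD₁0 hD₂0) (mul_nonneg hΓ₁.le hΓ₂.le)) hbt
        _ = (D₁ * D₂ * M / (Γ₁ * Γ₂)) * (b - t) ^ (β - 1) := by ring
    exact hle.trans heval
  -- Fubini: integrability of the uncurried function
  have hFint : Integrable (Function.uncurry f) (μ.prod μ) := by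
    rw [integrable_prod_iff hFm.aestronglyMeasurable]
    constructor
    · filter_upwards [ae_restrict_mem measurableSet_Ioc] with t ht
      exact hslice t ht
    · apply Integrable.mono'
        (g := fun t => (D₁ * D₂ * M / (Γ₁ * Γ₂)) * (b - t) ^ (β - 1))
      · apply Integrable.const_mul
        have h := (intervalIntegral.intervalIntegrable_rpow' (a := 0) (b := b - a)
          hβ').comp_sub_left b
        have h2 : IntervalIntegrable (fun t => (b - t) ^ (β - 1)) volume a b := by
          simpa using h.symm
        exact h2.1
      · exact hFm.aestronglyMeasurable.norm.integral_prod_right'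
      · filter_upwards [ae_restrict_mem measurableSet_Ioc, ae_restrict_of_ae hbd₂] with t ht h2
        have h0 : 0 ≤ ∫ s, ‖f t s‖ ∂μ := integral_nonneg fun s => norm_nonneg _
        simp only [Function.uncurry_apply_pair]
        rw [Real.norm_eq_abs, abs_of_nonneg h0]
        exact hnormbd t ht (h2 ⟨ht.1.le, ht.2⟩)
  -- Step 1: LHS as a double integral
  have step1 : (∫ t in a..b, ((b - t) ^ (β - 1) / Γ₂) *
        ⟪∫ s in a..t, ((t - s) ^ (-α) / Γ₁) • x₁ s, x₂ t⟫)
      = ∫ t, (∫ s, f t s ∂μ) ∂μ := by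
    rw [intervalIntegral.integral_of_le hab.le]
    apply setIntegral_congr_fun measurableSet_Ioc
    intro t ht
    dsimp only
    have hsub : Ioc a t ⊆ Ioc a b := Ioc_subset_Ioc_right ht.2
    rw [intervalIntegral.integral_of_le ht.1.le]
    rw [real_inner_comm, ← integral_inner (hA t ht)]
    rw [← integral_const_mul]
    have : (fun s => ((b - t) ^ (β - 1) / Γ₂) * ⟪x₂ t, ((t - s) ^ (-α) / Γ₁) • x₁ s⟫)
        = fun s => ((b - t) ^ (β - 1) / Γ₂) * (((t - s) ^ (-α) / Γ₁) * ⟪x₁ s, x₂ t⟫) := by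
      funext s
      rw [real_inner_smul_right, real_inner_comm]
    rw [this]
    simp only [hμdef, hfdef]
    rw [integral_indicator measurableSet_Ioc, Measure.restrict_restrict measurableSet_Ioc,
      Set.inter_eq_left.mpr hsub]
  -- Step 3: the swapped double integral equals the RHS
  have step3 : (∫ s, (∫ t, f t s ∂μ) ∂μ)
      = ∫ t in a..b, ⟪x₁ t, ∫ s in t..b, (((s - t) ^ (-α) / Γ₁) * ((b - s) ^ (β - 1) / Γ₂)) • x₂ s⟫ := by
    rw [intervalIntegral.integral_of_le hab.le]
    apply setIntegral_congr_fun measurableSet_Ioc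
    intro s hs
    dsimp only
    have hind : (fun t => f t s) = (Ioi s).indicator (fun t => ((b - t) ^ (β - 1) / Γ₂) *
        (((t - s) ^ (-α) / Γ₁) * ⟪x₁ s, x₂ t⟫)) := by
      funext t
      simp only [hfdef]
      rcases lt_trichotomy s t with h | h | h
      · rw [Set.indicator_of_mem (by exact ⟨hs.1, h.le⟩ : s ∈ Ioc a t),
          Set.indicator_of_mem (by exact h : t ∈ Ioi s)]
      · subst h
        rw [Set.indicator_of_mem (by exact ⟨hs.1, le_rfl⟩ : s ∈ Ioc a s),
          Set.indicator_of_notMem (by simp : s ∉ Ioi s)]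
        rw [sub_self, Real.zero_rpow (by linarith : -α ≠ 0)]
        simp
      · rw [Set.indicator_of_notMem (by simp [Set.mem_Ioc]; intro _; linarith),
          Set.indicator_of_notMem (by simp [Set.mem_Ioi]; linarith)]
    rw [hind, hμdef, integral_indicator measurableSet_Ioi,
      Measure.restrict_restrict measurableSet_Ioi]
    have hset : Ioi s ∩ Ioc a b = Ioc s b := by
      ext u
      simp only [Set.mem_inter_iff, Set.mem_Ioi, Set.mem_Ioc]
      constructor
      · rintro ⟨h1, _, h3⟩; exact ⟨h1, h3⟩
      · rintro ⟨h1, h2⟩; exact ⟨h1, hs.1.trans h1, h2⟩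
    rw [hset]
    rw [intervalIntegral.integral_of_le hs.2]
    rw [← integral_inner (hB s hs)]
    apply setIntegral_congr_fun measurableSet_Ioc
    intro t ht
    dsimp only
    rw [real_inner_smul_right]
    ring
  rw [step1, integral_integral_swap hFint, step3]
end

section
/- Let 0 < α ≤ 1 and β > 0, and let φ : ℝⁿ×ℝⁿ → ℝ and L : ℝⁿ×ℝⁿ×[a,b] → ℝ be of class C². Let (u,y), (ν,w) ∈ L^∞([a,b],ℝⁿ)×ℝⁿ, and set x(t) := y + ∫_a^t ((t−s)^{α−1}/Γ(α)) u(s) ds, η(t) := w + ∫_a^t ((t−s)^{α−1}/Γ(α)) ν(s) ds, and for h ∈ ℝ let 𝓛(h) := φ(x(a)+hη(a), x(b)+hη(b)) + ∫_a^b ((b−s)^{β−1}/Γ(β)) L( x(s)+hη(s), u(s)+hν(s), s ) ds. Then the limit lim_{h→0} (𝓛(h) − 𝓛(0))/h exists and equals ∂₁φ(x(a),x(b))·η(a) + ∂₂φ(x(a),x(b))·η(b) + ∫_a^b ((b−s)^{β−1}/Γ(β)) [ ∂₁L(x(s),u(s),s)·η(s) + ∂₂L(x(s),u(s),s)·ν(s)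 ] ds. -/
/-!
Riemann–Liouville integrals of essentially bounded controls are bounded on `[a, b]`, and they
are measurable, so for `|h| ≤ 1` the perturbed curves `(x + h η, u + h ν, s)` stay in a fixed
compact set, on which `L` and `DL` are bounded. Since `β > 0` the weight `(b - s) ^ (β - 1)` is
integrable, so dominated convergence lets us differentiate under the integral sign; the
derivatives of `φ` and `L` then split into their partial gradients.
-/
open MeasureTheory Set Filter Topology
open scoped RealInnerProductSpace Interval

section RiemannLiouville

variable {E : Type*} [NormedAddCommGroup E] [NormedSpace ℝ E]

noncomputable def riemannLiouville (α a : ℝ) (u : ℝ → E) (t : ℝ) : E :=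
  ∫ s in a..t, ((t - s) ^ (α - 1) / Real.Gamma α) • u s

lemma intervalIntegrable_sub_rpow {r : ℝ} (hr : -1 < r) (a t : ℝ) :
    IntervalIntegrable (fun s : ℝ => (t - s) ^ r) volume a t := by
  simpa using
    (intervalIntegral.intervalIntegrable_rpow' (a := t - a) (b := t - t) hr).comp_sub_left t

lemma integral_sub_rpow {α : ℝ} (hα : 0 < α) (a t : ℝ) :
    ∫ s in a..t, (t - s) ^ (α - 1) = (t - a) ^ α / α := by
  rw [intervalIntegral.integral_comp_sub_left (fun s => s ^ (α - 1)), sub_self,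
    integral_rpow (Or.inl (by linarith)), sub_add_cancel, Real.zero_rpow hα.ne', sub_zero]

lemma norm_riemannLiouville_le {α a t C : ℝ} {u : ℝ → E} (hα : 0 < α) (hat : a ≤ t)
    (hu : ∀ᵐ s, s ∈ Ioc a t → ‖u s‖ ≤ C) :
    ‖riemannLiouville α a u t‖ ≤ C * (t - a) ^ α / Real.Gamma (α + 1) := by
  have hΓ : 0 < Real.Gamma α := Real.Gamma_pos_of_pos hα
  calc ‖riemannLiouville α a u t‖
      ≤ ∫ s in a..t, (t - s) ^ (α - 1) / Real.Gamma α * C := by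
        refine intervalIntegral.norm_integral_le_of_norm_le hat (hu.mono fun s hs hst => ?_)
          (((intervalIntegrable_sub_rpow (by linarith) a t).div_const _).mul_const C)
        have hk : 0 ≤ (t - s) ^ (α - 1) / Real.Gamma α :=
          div_nonneg (Real.rpow_nonneg (by linarith [hst.2]) _) hΓ.le
        rw [norm_smul, Real.norm_of_nonneg hk]
        exact mul_le_mul_of_nonneg_left (hs hst) hk
    _ = C * (t - a) ^ α / Real.Gamma (α + 1) := by
        rw [intervalIntegral.integral_mul_const, intervalIntegral.integral_div,
          integral_sub_rpow hα, Real.Gamma_add_one hα.ne']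
        field_simp

lemma exists_forall_norm_riemannLiouville_le {α a b C : ℝ} {u : ℝ → E} (hα : 0 < α)
    (hu : ∀ᵐ s, s ∈ Icc a b → ‖u s‖ ≤ C) :
    ∃ R, ∀ t ∈ Icc a b, ‖riemannLiouville α a u t‖ ≤ R := by
  refine ⟨max C 0 * (b - a) ^ α / Real.Gamma (α + 1), fun t ⟨hat, htb⟩ => ?_⟩
  refine (norm_riemannLiouville_le (C := max C 0) hα hat (hu.mono fun s hs hst => ?_)).trans ?_
  · exact (hs (Ioc_subset_Icc_self.trans (Icc_subset_Icc_right htb) hst)).trans (le_max_left _ _)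
  · have hΓ := Real.Gamma_pos_of_pos (show 0 < α + 1 by linarith)
    gcongr

lemma MeasureTheory.StronglyMeasurable.intervalIntegral_prod_right {f : ℝ × ℝ → E}
    (hf : StronglyMeasurable f) (a : ℝ) : StronglyMeasurable fun t => ∫ s in a..t, f (t, s) := by
  have hmeas : ∀ {g₁ g₂ : ℝ × ℝ → ℝ}, Measurable g₁ → Measurable g₂ →
      StronglyMeasurable fun t => ∫ s, {q : ℝ × ℝ | g₁ q < q.2 ∧ q.2 ≤ g₂ q}.indicator f (t, s) :=
    fun h₁ h₂ => (hf.indicator ((_root_.measurableSet_lt h₁ measurable_snd).inter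
      (_root_.measurableSet_le measurable_snd h₂))).integral_prod_right'
  convert (hmeas measurable_const measurable_fst).sub (hmeas measurable_fst measurable_const)
    using 1
  ext t
  simp only [intervalIntegral, ← integral_indicator measurableSet_Ioc]
  rfl

lemma stronglyMeasurable_riemannLiouville {u : ℝ → E} (hu : StronglyMeasurable u) (α a : ℝ) :
    StronglyMeasurable (riemannLiouville α a u) :=
  have hk : Measurable fun q : ℝ × ℝ => (q.1 - q.2) ^ (α - 1) / Real.Gamma α := by fun_prop
  (hk.stronglyMeasurable.smul (hu.comp_measurable measurable_snd)).intervalIntegral_prod_right a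

end RiemannLiouville

section DifferentiationUnderIntegral

variable {G F : Type*} [NormedAddCommGroup G] [NormedSpace ℝ G]
  [NormedAddCommGroup F] [NormedSpace ℝ F]

lemma DifferentiableAt.hasDerivAt_comp_add_smul {f : G → F} {p v : G} {h₀ : ℝ}
    (hf : DifferentiableAt ℝ f (p + h₀ • v)) :
    HasDerivAt (fun h : ℝ => f (p + h • v)) (fderiv ℝ f (p + h₀ • v) v) h₀ := by
  simpa [Function.comp_def] using
    hf.hasFDerivAt.comp_hasDerivAt h₀ (((hasDerivAt_id h₀).smul_const v).const_add p)

theorem hasDerivAt_intervalIntegral_smul_comp_add_smul [CompleteSpace F] {μ : Measure ℝ}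
    {L : G → F} (hL : ContDiff ℝ 1 L) {c : ℝ → ℝ} {a b : ℝ} (hc : IntervalIntegrable c μ a b)
    {γ δ : ℝ → G} {K K' : Set G} (hK : IsCompact K) (hK' : IsCompact K')
    (hγm : AEStronglyMeasurable γ (μ.restrict (Ι a b)))
    (hδm : AEStronglyMeasurable δ (μ.restrict (Ι a b)))
    (hγ : ∀ᵐ s ∂μ.restrict (Ι a b), γ s ∈ K) (hδ : ∀ᵐ s ∂μ.restrict (Ι a b), δ s ∈ K') :
    HasDerivAt (fun h : ℝ => ∫ s in a..b, c s • L (γ s + h • δ s) ∂μ)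
      (∫ s in a..b, c s • fderiv ℝ L (γ s) (δ s) ∂μ) 0 := by
  set P := (fun q : ℝ × G × G => q.2.1 + q.1 • q.2.2) '' (Icc (-1) 1 ×ˢ K ×ˢ K')
  have hP : IsCompact P := (isCompact_Icc.prod (hK.prod hK')).image (by fun_prop)
  obtain ⟨M, hM⟩ :=
    hP.exists_bound_of_continuousOn (hL.continuous_fderiv one_ne_zero).continuousOn
  obtain ⟨N, hN⟩ := hP.exists_bound_of_continuousOn hL.continuous.continuousOn
  obtain ⟨D, hD⟩ := hK'.isBounded.exists_norm_le
  have hmem : ∀ᵐ s ∂μ.restrict (Ι a b), ∀ h ∈ Metric.ball (0 : ℝ) 1, γ s + h • δ s ∈ P := by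
    filter_upwards [hγ, hδ] with s hγs hδs h hh
    have hh : |h| ≤ 1 := by simpa using (mem_ball_zero_iff.1 hh).le
    exact ⟨(h, γ s, δ s), ⟨abs_le.1 hh, hγs, hδs⟩, rfl⟩
  have hmeas : ∀ h : ℝ,
      AEStronglyMeasurable (fun s => c s • L (γ s + h • δ s)) (μ.restrict (Ι a b)) := fun h =>
    hc.def'.aestronglyMeasurable.smul
      (hL.continuous.comp_aestronglyMeasurable (hγm.add (hδm.const_smul h)))
  have hDL : Continuous fun p : G × G => fderiv ℝ L p.1 p.2 :=
    (hL.continuous_fderiv one_ne_zero).fst'.clm_apply continuous_snd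
  have key := intervalIntegral.hasDerivAt_integral_of_dominated_loc_of_deriv_le
    (F' := fun h s => c s • fderiv ℝ L (γ s + h • δ s) (δ s)) (bound := fun s => |c s| * (M * D))
    (Metric.ball_mem_nhds 0 one_pos) (Eventually.of_forall hmeas) ?_ ?_ ?_
    (hc.abs.mul_const _) ?_
  · simpa only [zero_smul, add_zero] using key.2
  · refine (hc.abs.mul_const N).mono_fun' (hmeas 0) ?_
    filter_upwards [hmem] with s hs
    rw [norm_smul, Real.norm_eq_abs]
    exact mul_le_mul_of_nonneg_left (hN _ (hs 0 (Metric.mem_ball_self one_pos))) (abs_nonneg _)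
  · exact hc.def'.aestronglyMeasurable.smul
      (hDL.comp_aestronglyMeasurable ((hγm.add (hδm.const_smul 0)).prodMk hδm))
  · rw [← ae_restrict_iff' measurableSet_uIoc]
    filter_upwards [hmem, hδ] with s hs hδs h hh
    rw [norm_smul, Real.norm_eq_abs]
    exact mul_le_mul_of_nonneg_left
      (ContinuousLinearMap.le_of_opNorm_le_of_le _ (hM _ (hs h hh)) (hD _ hδs)) (abs_nonneg _)
  · exact Eventually.of_forall fun s _ h _ =>
      ((hL.differentiable one_ne_zero _).hasDerivAt_comp_add_smul).const_smul (c s)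

end DifferentiationUnderIntegral

section Gradient

variable {E E' G : Type*} [NormedAddCommGroup E] [InnerProductSpace ℝ E] [CompleteSpace E]
  [NormedAddCommGroup E'] [InnerProductSpace ℝ E'] [CompleteSpace E']
  [NormedAddCommGroup G] [NormedSpace ℝ G]

lemma inner_gradient_comp_eq_fderiv {f : G → ℝ} {e : E → G} {e' : E →L[ℝ] G} {z : E}
    (hf : DifferentiableAt ℝ f (e z)) (he : HasFDerivAt e e' z) (v : E) :
    ⟪gradient (fun z => f (e z)) z, v⟫ = fderiv ℝ f (e z) (e' v) := by
  have hfe : HasFDerivAt (fun z => f (e z)) ((fderiv ℝ f (e z)).comp e') z :=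
    hf.hasFDerivAt.comp z he
  rw [gradient, InnerProductSpace.toDual_symm_apply, hfe.fderiv]
  rfl

lemma fderiv_apply_eq_inner_gradient_add_inner_gradient {f : E × E' → ℝ} {p : E} {q : E'}
    (hf : DifferentiableAt ℝ f (p, q)) (v : E) (w : E') :
    fderiv ℝ f (p, q) (v, w)
      = ⟪gradient (fun z => f (z, q)) p, v⟫ + ⟪gradient (fun z => f (p, z)) q, w⟫ := by
  rw [inner_gradient_comp_eq_fderiv (e := fun z => (z, q)) hf (hasFDerivAt_prodMk_left p q),
    inner_gradient_comp_eq_fderiv (e := fun z => (p, z)) hf (hasFDerivAt_prodMk_right p q),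
    ← map_add]
  simp

lemma fderiv_apply_zero_eq_inner_gradient_add_inner_gradient {f : E × E' × G → ℝ} {p : E}
    {q : E'} {r : G} (hf : DifferentiableAt ℝ f (p, q, r)) (v : E) (w : E') :
    fderiv ℝ f (p, q, r) (v, w, 0)
      = ⟪gradient (fun z => f (z, q, r)) p, v⟫ + ⟪gradient (fun z => f (p, z, r)) q, w⟫ := by
  rw [inner_gradient_comp_eq_fderiv (e := fun z => (z, q, r)) hf
      (hasFDerivAt_prodMk_left p (q, r)),
    inner_gradient_comp_eq_fderiv (e := fun z => (p, z, r)) hf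
      ((hasFDerivAt_const p q).prodMk (hasFDerivAt_prodMk_left q r)),
    ← map_add]
  simp

end Gradient

theorem stmt_4_general (n : ℕ) (a b : ℝ) (hab : a < b)
    (α β : ℝ) (hα0 : 0 < α) (hβ : 0 < β)
    (φ : EuclideanSpace ℝ (Fin n) × EuclideanSpace ℝ (Fin n) → ℝ)
    (L : EuclideanSpace ℝ (Fin n) × EuclideanSpace ℝ (Fin n) × ℝ → ℝ)
    (hφ : ContDiff ℝ 2 φ) (hL : ContDiff ℝ 2 L)
    (u ν : ℝ → EuclideanSpace ℝ (Fin n)) (hum : Measurable u) (hνm : Measurable ν)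
    (Cu Cν : ℝ)
    (hub : ∀ᵐ s ∂(volume : Measure ℝ), s ∈ Icc a b → ‖u s‖ ≤ Cu)
    (hνb : ∀ᵐ s ∂(volume : Measure ℝ), s ∈ Icc a b → ‖ν s‖ ≤ Cν)
    (y w : EuclideanSpace ℝ (Fin n)) (x η : ℝ → EuclideanSpace ℝ (Fin n))
    (hx : ∀ t, x t = y + ∫ s in a..t, ((t - s) ^ (α - 1) / Real.Gamma α) • u s)
    (hη : ∀ t, η t = w + ∫ s in a..t, ((t - s) ^ (α - 1) / Real.Gamma α) • ν s)
    (𝓛 : ℝ → ℝ)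
    (h𝓛 : ∀ h : ℝ, 𝓛 h = φ (x a + h • η a, x b + h • η b) +
        ∫ s in a..b, ((b - s) ^ (β - 1) / Real.Gamma β) * L (x s + h • η s, u s + h • ν s, s)) :
    Tendsto (fun h : ℝ => (𝓛 h - 𝓛 0) / h) (𝓝[≠] (0 : ℝ))
      (𝓝 (⟪gradient (fun z => φ (z, x b)) (x a), η a⟫
        + ⟪gradient (fun z => φ (x a, z)) (x b), η b⟫
        + ∫ s in a..b, ((b - s) ^ (β - 1) / Real.Gamma β) *
            (⟪gradient (fun z => L (z, u s, s)) (x s), η s⟫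
              + ⟪gradient (fun z => L (x s, z, s)) (u s), ν s⟫))) := by
  obtain ⟨Rx, hRx⟩ := exists_forall_norm_riemannLiouville_le hα0 hub
  obtain ⟨Rη, hRη⟩ := exists_forall_norm_riemannLiouville_le hα0 hνb
  have hxm : StronglyMeasurable x := (funext hx : x = fun t => y + riemannLiouville α a u t) ▸
    stronglyMeasurable_const.add (stronglyMeasurable_riemannLiouville hum.stronglyMeasurable α a)
  have hηm : StronglyMeasurable η := (funext hη : η = fun t => w + riemannLiouville α a ν t) ▸
    stronglyMeasurable_const.add (stronglyMeasurable_riemannLiouville hνm.stronglyMeasurable α a)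
  have hmem : ∀ᵐ s ∂volume.restrict (Ι a b),
      (x s, u s, s) ∈ Metric.closedBall 0 (‖y‖ + Rx) ×ˢ Metric.closedBall 0 Cu ×ˢ Icc a b ∧
      (η s, ν s, (0 : ℝ)) ∈ Metric.closedBall 0 (‖w‖ + Rη) ×ˢ Metric.closedBall 0 Cν ×ˢ {0} := by
    rw [uIoc_of_le hab.le, ae_restrict_iff' measurableSet_Ioc]
    filter_upwards [hub, hνb] with s hus hνs hs
    replace hs := Ioc_subset_Icc_self hs
    simp only [mem_prod, mem_closedBall_zero_iff, hx, hη, mem_singleton_iff]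
    exact ⟨⟨norm_add_le_of_le le_rfl (hRx s hs), hus hs, hs⟩,
      ⟨norm_add_le_of_le le_rfl (hRη s hs), hνs hs, trivial⟩⟩
  have hint := hasDerivAt_intervalIntegral_smul_comp_add_smul (hL.of_le one_le_two)
    (δ := fun s => (η s, ν s, 0))
    ((intervalIntegrable_sub_rpow (r := β - 1) (by linarith) a b).div_const (Real.Gamma β))
    ((isCompact_closedBall _ _).prod ((isCompact_closedBall _ _).prod isCompact_Icc))
    ((isCompact_closedBall _ _).prod ((isCompact_closedBall _ _).prod isCompact_singleton))
    (hxm.aestronglyMeasurable.prodMk (hum.aestronglyMeasurable.prodMk aestronglyMeasurable_id))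
    (hηm.aestronglyMeasurable.prodMk (hνm.aestronglyMeasurable.prodMk aestronglyMeasurable_const))
    (hmem.mono fun _ h => h.1) (hmem.mono fun _ h => h.2)
  have hbdry := (hφ.differentiable two_ne_zero (x a, x b)).hasFDerivAt.hasLineDerivAt (η a, η b)
  have hderiv := hbdry.add hint
  rw [fderiv_apply_eq_inner_gradient_add_inner_gradient (hφ.differentiable two_ne_zero _)] at hderiv
  simp only [fderiv_apply_zero_eq_inner_gradient_add_inner_gradient
    (hL.differentiable two_ne_zero _), Prod.smul_mk, Prod.mk_add_mk, id_eq, mul_zero, add_zero,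
    smul_eq_mul, Pi.add_def, ← h𝓛] at hderiv
  simpa only [slope_fun_def_field, sub_zero] using hasDerivAt_iff_tendsto_slope.mp hderiv

theorem stmt_4 (n : ℕ) (hn : 1 ≤ n) (a b : ℝ) (hab : a < b)
    (α β : ℝ) (hα0 : 0 < α) (hα1 : α ≤ 1) (hβ : 0 < β)
    (φ : EuclideanSpace ℝ (Fin n) × EuclideanSpace ℝ (Fin n) → ℝ)
    (L : EuclideanSpace ℝ (Fin n) × EuclideanSpace ℝ (Fin n) × ℝ → ℝ)
    (hφ : ContDiff ℝ 2 φ) (hL : ContDiff ℝ 2 L)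
    (u ν : ℝ → EuclideanSpace ℝ (Fin n)) (hum : Measurable u) (hνm : Measurable ν)
    (Cu Cν : ℝ)
    (hub : ∀ᵐ s ∂(volume : Measure ℝ), s ∈ Icc a b → ‖u s‖ ≤ Cu)
    (hνb : ∀ᵐ s ∂(volume : Measure ℝ), s ∈ Icc a b → ‖ν s‖ ≤ Cν)
    (y w : EuclideanSpace ℝ (Fin n)) (x η : ℝ → EuclideanSpace ℝ (Fin n))
    (hx : ∀ t, x t = y + ∫ s in a..t, ((t - s) ^ (α - 1) / Real.Gamma α) • u s)
    (hη : ∀ t, η t = w + ∫ s in a..t, ((t - s) ^ (α - 1) / Real.Gamma α) • ν s)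
    (𝓛 : ℝ → ℝ)
    (h𝓛 : ∀ h : ℝ, 𝓛 h = φ (x a + h • η a, x b + h • η b) +
        ∫ s in a..b, ((b - s) ^ (β - 1) / Real.Gamma β) * L (x s + h • η s, u s + h • ν s, s)) :
    Tendsto (fun h : ℝ => (𝓛 h - 𝓛 0) / h) (𝓝[≠] (0 : ℝ))
      (𝓝 (⟪gradient (fun z => φ (z, x b)) (x a), η a⟫
        + ⟪gradient (fun z => φ (x a, z)) (x b), η b⟫
        + ∫ s in a..b, ((b - s) ^ (β - 1) / Real.Gamma β) *
            (⟪gradient (fun z => L (z, u s, s)) (x s), η s⟫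
              + ⟪gradient (fun z => L (x s, z, s)) (u s), ν s⟫))) :=
  stmt_4_general n a b hab α β hα0 hβ φ L hφ hL u ν hum hνm Cu Cν hub hνb y w x η hx hη 𝓛 h𝓛
end

section
/- Let 0 < α < 1, let u ∈ L¹([a,b],ℝⁿ), and let x : [a,b] → ℝⁿ be a continuous function such that x(t) = x(a) + ∫_a^t ((t−s)^{α−1}/Γ(α)) u(s) ds for almost every t ∈ [a,b] (so u is the Caputo fractional derivative of order α of x). Suppose there exist real numbers a ≤ c < d ≤ b such that x(t) = 0 for all t ∈ [c,d] and u(t) = 0 for almost every t ∈ [c,d]. Then x(t) = 0 for all t ∈ [a,d]. -/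
/-!
Write `F_β(t) = ∫_a^c (t - s)^β u(s) ds` for the contribution of the past `[a, c]` to the
fractional integral at a time `t > c`. On `(c, d)` the hypotheses give
`x(a) + Γ(α)⁻¹ F_{α-1}(t) = 0`, so `F_{α-1}` is constant there. Differentiating in `t`
(`F_β' = β F_{β-1}`) and using `α - 1 ∉ ℕ`, every `F_{α-2-m}` vanishes on `(c, d)`. At a fixed
`t₀ ∈ (c, d)` this says that `(t₀ - s)^{α-2} u(s)` is orthogonal to every polynomial in
`(t₀ - s)⁻¹` on `[a, c]`; by Stone–Weierstrass these are dense in `C([a, c])`, so `u = 0` a.e.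
on `[a, c]`, hence on `[a, d]`. Then `x = x(a)` a.e. on `[a, d]`, so everywhere by continuity,
and `x(a) = x(d) = 0`.
-/

open MeasureTheory Set Metric

variable {E : Type*} [NormedAddCommGroup E] [NormedSpace ℝ E]

theorem integral_smul_eq_zero_of_integral_pow_smul_eq_zero {K : Set ℝ} (hK : IsCompact K)
    {w : ℝ → E} (hw : IntegrableOn w K) {φ : ℝ → ℝ} (hφ : ContinuousOn φ K) (hφ_inj : InjOn φ K)
    (hmom : ∀ m : ℕ, ∫ s in K, φ s ^ m • w s = 0) {g : ℝ → ℝ} (hg : ContinuousOn g K) :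
    ∫ s in K, g s • w s = 0 := by
  have : CompactSpace K := isCompact_iff_compactSpace.mp hK
  set μ : Measure K := volume.comap Subtype.val
  have hwμ : Integrable (fun s : K => w s) μ :=
    (integrableOn_iff_comap_subtypeVal hK.measurableSet).1 hw
  have hint (h : C(K, ℝ)) : Integrable (fun s => h s • w s) μ :=
    hwμ.bdd_smul ‖h‖ h.continuous.aestronglyMeasurable (ae_of_all _ h.norm_coe_le_norm)
  let T : C(K, ℝ) →L[ℝ] E := LinearMap.mkContinuous
    { toFun := fun h => ∫ s, h s • w s ∂μ
      map_add' := fun h h' => by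
        simp only [ContinuousMap.add_apply, add_smul]
        exact integral_add (hint h) (hint h')
      map_smul' := fun r h => by
        simp only [ContinuousMap.smul_apply, smul_eq_mul, mul_smul]
        exact integral_smul r _ }
    (∫ s, ‖w s‖ ∂μ) fun h => by
      rw [mul_comm, ← integral_const_mul]
      refine norm_integral_le_of_norm_le (hwμ.norm.const_mul _) (ae_of_all _ fun s => ?_)
      rw [norm_smul]
      exact mul_le_mul_of_nonneg_right (h.norm_coe_le_norm s) (norm_nonneg _)
  have hT (h : ℝ → ℝ) (hh : ContinuousOn h K) :
      T ⟨K.domRestrict h, hh.domRestrict⟩ = ∫ s in K, h s • w s :=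
    integral_subtype_comap hK.measurableSet (fun s => h s • w s)
  let φK : C(K, ℝ) := ⟨K.domRestrict φ, hφ.domRestrict⟩
  have hsep : (Algebra.adjoin ℝ {φK}).SeparatesPoints := fun s₁ s₂ hne =>
    ⟨_, ⟨φK, Algebra.subset_adjoin rfl, rfl⟩, fun h => hne (Subtype.ext (hφ_inj s₁.2 s₂.2 h))⟩
  have hadjoin :
      (Algebra.adjoin ℝ {φK} : Set C(K, ℝ)) ⊆ LinearMap.ker (T : C(K, ℝ) →ₗ[ℝ] E) := by
    rw [← Subalgebra.coe_toSubmodule, Algebra.adjoin_eq_span, SetLike.coe_subset_coe,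
      Submodule.span_le]
    intro h hh
    obtain ⟨m, rfl⟩ := Submonoid.mem_closure_singleton.1 hh
    exact (hT _ (hφ.pow m)).trans (hmom m)
  have hclosure := closure_minimal hadjoin T.isClosed_ker
  rw [← Subalgebra.topologicalClosure_coe,
    ContinuousMap.subalgebra_topologicalClosure_eq_top_of_separatesPoints _ hsep] at hclosure
  rw [← hT g hg]
  exact hclosure (mem_univ _)

theorem ae_eq_zero_of_integral_pow_smul_eq_zero [CompleteSpace E] {K : Set ℝ} (hK : IsCompact K)
    {w : ℝ → E} (hw : IntegrableOn w K) {φ : ℝ → ℝ} (hφ : ContinuousOn φ K) (hφ_inj : InjOn φ K)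
    (hmom : ∀ m : ℕ, ∫ s in K, φ s ^ m • w s = 0) : ∀ᵐ s ∂volume.restrict K, w s = 0 :=
  ae_eq_zero_of_integral_contDiff_smul_eq_zero hw.locallyIntegrable fun _ hg _ =>
    integral_smul_eq_zero_of_integral_pow_smul_eq_zero hK hw hφ hφ_inj hmom
      hg.continuous.continuousOn

noncomputable def memoryIntegral (u : ℝ → E) (a c β t : ℝ) : E :=
  ∫ s in a..c, (t - s) ^ β • u s

section MemoryIntegral

variable {u : ℝ → E} {a c : ℝ}

theorem continuousOn_rpow_sub {t β : ℝ} {K : Set ℝ} (hK : K ⊆ Iio t) :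
    ContinuousOn (fun s : ℝ => (t - s) ^ β) K := fun _ hs =>
  ((continuousAt_const.sub continuousAt_id).rpow_const
    (Or.inl (sub_ne_zero.2 (hK hs).ne'))).continuousWithinAt

theorem integrableOn_rpow_sub_smul (hu : IntegrableOn u (Icc a c)) (β : ℝ) {t : ℝ} (ht : c < t) :
    IntegrableOn (fun s => (t - s) ^ β • u s) (Icc a c) :=
  hu.continuousOn_smul (continuousOn_rpow_sub fun _ hs => hs.2.trans_lt ht) isCompact_Icc

theorem hasDerivAt_memoryIntegral (hac : a ≤ c)
    (hu : IntegrableOn u (Icc a c)) (β : ℝ) {t : ℝ} (ht : c < t) :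
    HasDerivAt (memoryIntegral u a c β) (β • memoryIntegral u a c (β - 1) t) t := by
  set r := (t - c) / 2
  have hr : 0 < r := by simp only [r]; linarith
  have hpos : ∀ t' ∈ closedBall t r, ∀ s ∈ Icc a c, 0 < t' - s := fun t' ht' s hs => by
    have := (abs_le.1 (mem_closedBall.1 ht')).1
    simp only [r] at this; linarith [hs.2]
  obtain ⟨C, hC⟩ : ∃ C, ∀ p ∈ closedBall t r ×ˢ Icc a c, ‖β * (p.1 - p.2) ^ (β - 1)‖ ≤ C := by
    refine ((isCompact_closedBall t r).prod isCompact_Icc).exists_bound_of_continuousOn ?_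
    intro p hp
    exact (continuousAt_const.mul ((continuousAt_fst.sub continuousAt_snd).rpow_const
      (Or.inl (hpos _ hp.1 _ hp.2).ne'))).continuousWithinAt
  have hIoc : uIoc a c ⊆ Icc a c := by rw [uIoc_of_le hac]; exact Ioc_subset_Icc_self
  refine (intervalIntegral.hasDerivAt_integral_of_dominated_loc_of_deriv_le
    (μ := volume) (a := a) (b := c)
    (F := fun t s => (t - s) ^ β • u s) (F' := fun t s => (β * (t - s) ^ (β - 1)) • u s)
    (bound := fun s => C * ‖u s‖) (closedBall_mem_nhds t hr) ?_ ?_ ?_ ?_ ?_ ?_).2.congr_deriv ?_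
  · filter_upwards [lt_mem_nhds ht] with t' ht'
    exact ((integrableOn_rpow_sub_smul hu β ht').mono_set hIoc).aestronglyMeasurable
  · exact (intervalIntegrable_iff_integrableOn_Icc_of_le hac).2
      (integrableOn_rpow_sub_smul hu β ht)
  · simp only [mul_smul]
    exact (((integrableOn_rpow_sub_smul hu (β - 1) ht).mono_set hIoc).smul β).aestronglyMeasurable
  · refine ae_of_all _ fun s hs t' ht' => ?_
    rw [norm_smul]
    exact mul_le_mul_of_nonneg_right (hC (t', s) ⟨ht', hIoc hs⟩) (norm_nonneg _)
  · exact (intervalIntegrable_iff_integrableOn_Icc_of_le hac).2 (hu.norm.const_mul C)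
  · refine ae_of_all _ fun s hs t' ht' => ?_
    simpa using (((hasDerivAt_id t').sub_const s).rpow_const (p := β)
      (Or.inl (hpos t' ht' s (hIoc hs)).ne')).smul_const (u s)
  · simp only [mul_smul, intervalIntegral.integral_smul, memoryIntegral]

theorem intervalIntegral_smul_eq_zero_of_ae {k : ℝ → ℝ} {t : ℝ} (hat : a ≤ t)
    (hu : ∀ᵐ s ∂volume.restrict (Ioc a t), u s = 0) : ∫ s in a..t, k s • u s = 0 := by
  rw [intervalIntegral.integral_of_le hat]
  refine integral_eq_zero_of_ae ?_
  filter_upwards [hu] with s hs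
  rw [hs, smul_zero, Pi.zero_apply]

theorem intervalIntegral_rpow_sub_smul_eq_memoryIntegral (hac : a ≤ c)
    (hu : IntegrableOn u (Icc a c)) {β t : ℝ} (hct : c < t)
    (hu0 : ∀ᵐ s ∂volume.restrict (Ioc c t), u s = 0) :
    ∫ s in a..t, (t - s) ^ β • u s = memoryIntegral u a c β t := by
  have hzero : (fun s => (t - s) ^ β • u s) =ᵐ[volume.restrict (Ioc c t)] 0 := by
    filter_upwards [hu0] with s hs
    rw [hs, smul_zero, Pi.zero_apply]
  have hint : IntervalIntegrable (fun s => (t - s) ^ β • u s) volume c t :=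
    (intervalIntegrable_iff_integrableOn_Ioc_of_le hct.le).2
      ((integrable_zero _ _ _).congr hzero.symm)
  rw [← intervalIntegral.integral_add_adjacent_intervals (b := c)
    ((intervalIntegrable_iff_integrableOn_Icc_of_le hac).2 (integrableOn_rpow_sub_smul hu β hct))
    hint,
    intervalIntegral_smul_eq_zero_of_ae hct.le hu0, add_zero, memoryIntegral]

theorem memoryIntegral_eqOn_zero_of_eqOn_const (hac : a ≤ c)
    (hu : IntegrableOn u (Icc a c)) {β d : ℝ} {K : E} (hβ : β ≠ 0)
    (h : EqOn (memoryIntegral u a c β) (fun _ => K) (Ioo c d)) :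
    EqOn (memoryIntegral u a c (β - 1)) 0 (Ioo c d) := fun t ht => by
  have hconst : HasDerivAt (memoryIntegral u a c β) 0 t :=
    (hasDerivAt_const t K).congr_of_eventuallyEq
      (Filter.eventually_of_mem (isOpen_Ioo.mem_nhds ht) h)
  exact (smul_eq_zero.1 ((hasDerivAt_memoryIntegral hac hu β ht.1).unique hconst)).resolve_left hβ

theorem memoryIntegral_sub_one_sub_natCast_eqOn_zero (hac : a ≤ c)
    (hu : IntegrableOn u (Icc a c)) {β d : ℝ} {K : E} (hβ : ∀ k : ℕ, β ≠ k)
    (h : EqOn (memoryIntegral u a c β) (fun _ => K) (Ioo c d)) (k : ℕ) :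
    EqOn (memoryIntegral u a c (β - 1 - k)) 0 (Ioo c d) := by
  induction k with
  | zero => simpa using memoryIntegral_eqOn_zero_of_eqOn_const hac hu (mod_cast hβ 0) h
  | succ k ih =>
    have hk : β - 1 - k ≠ 0 := by
      rw [sub_sub, sub_ne_zero, add_comm]; exact_mod_cast hβ (k + 1)
    convert memoryIntegral_eqOn_zero_of_eqOn_const hac hu hk ih using 2
    push_cast; ring

theorem ae_eq_zero_of_memoryIntegral_ae_eq_const [CompleteSpace E] (hac : a ≤ c)
    (hu : IntegrableOn u (Icc a c)) {β d : ℝ} {K : E} (hcd : c < d) (hβ : ∀ k : ℕ, β ≠ k)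
    (hK : memoryIntegral u a c β =ᵐ[volume.restrict (Ioo c d)] fun _ => K) :
    ∀ᵐ s ∂volume.restrict (Icc a c), u s = 0 := by
  have h := Measure.eqOn_open_of_ae_eq hK isOpen_Ioo
    (fun t ht => (hasDerivAt_memoryIntegral hac hu β ht.1).continuousAt.continuousWithinAt)
    continuousOn_const
  set t := (c + d) / 2
  have ht : t ∈ Ioo c d := ⟨by simp only [t]; linarith, by simp only [t]; linarith⟩
  have hpos : ∀ s ∈ Icc a c, 0 < t - s := fun s hs => by linarith [hs.2, ht.1]
  have hmom (m : ℕ) : ∫ s in Icc a c, (t - s)⁻¹ ^ m • (t - s) ^ (β - 1) • u s = 0 := by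
    have h0 : memoryIntegral u a c (β - 1 - m) t = 0 :=
      memoryIntegral_sub_one_sub_natCast_eqOn_zero hac hu hβ h m ht
    rw [← h0, memoryIntegral,
      intervalIntegral.integral_of_le hac, integral_Icc_eq_integral_Ioc]
    refine setIntegral_congr_fun measurableSet_Ioc fun s hs => ?_
    have hs := hpos s (Ioc_subset_Icc_self hs)
    rw [smul_smul, inv_pow, ← Real.rpow_natCast, ← Real.rpow_neg hs.le, ← Real.rpow_add hs]
    ring_nf
  have hw := ae_eq_zero_of_integral_pow_smul_eq_zero isCompact_Icc
    (integrableOn_rpow_sub_smul hu (β - 1) ht.1)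
    ((continuousOn_const.sub continuousOn_id).inv₀ fun s hs => (hpos s hs).ne')
    (fun s _ s' _ hss' => sub_right_injective (inv_injective hss')) hmom
  filter_upwards [hw, ae_restrict_mem measurableSet_Icc] with s hs hsK
  exact (smul_eq_zero.1 hs).resolve_left (Real.rpow_pos_of_pos (hpos s hsK) _).ne'

theorem eqOn_const_of_ae_eq_add_integral_smul {x : ℝ → E} {k : ℝ → ℝ → ℝ} {d : ℝ} (had : a < d)
    (hx : ContinuousOn x (Icc a d)) (hu : ∀ᵐ s ∂volume.restrict (Icc a d), u s = 0)
    (hxu : ∀ᵐ t ∂volume.restrict (Icc a d), x t = x a + ∫ s in a..t, k t s • u s) :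
    EqOn x (fun _ => x a) (Icc a d) := by
  refine Measure.eqOn_Icc_of_ae_eq volume had.ne ?_ hx continuousOn_const
  filter_upwards [hxu, ae_restrict_mem measurableSet_Icc] with t hxt ht
  rw [hxt, intervalIntegral_smul_eq_zero_of_ae ht.1 (ae_restrict_of_ae_restrict_of_subset
    (Ioc_subset_Icc_self.trans (Icc_subset_Icc_right ht.2)) hu), add_zero]

end MemoryIntegral

theorem stmt_9_general (n : ℕ) (a b : ℝ)
    (α : ℝ) (hα0 : 0 < α) (hα1 : α < 1)
    (u : ℝ → EuclideanSpace ℝ (Fin n)) (hu : IntegrableOn u (Icc a b))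
    (x : ℝ → EuclideanSpace ℝ (Fin n)) (hx : ContinuousOn x (Icc a b))
    (hxu : ∀ᵐ t ∂(volume.restrict (Icc a b)),
      x t = x a + ∫ s in a..t, ((t - s) ^ (α - 1) / Real.Gamma α) • u s)
    (c d : ℝ) (hac : a ≤ c) (hcd : c < d) (hdb : d ≤ b)
    (hx0 : ∀ t ∈ Icc c d, x t = 0)
    (hu0 : ∀ᵐ t ∂(volume.restrict (Icc c d)), u t = 0) :
    ∀ t ∈ Icc a d, x t = 0 := by
  have hΓ : Real.Gamma α ≠ 0 := (Real.Gamma_pos_of_pos hα0).ne'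
  have had : Icc a d ⊆ Icc a b := Icc_subset_Icc_right hdb
  have huac : IntegrableOn u (Icc a c) := hu.mono_set (Icc_subset_Icc_right (hcd.le.trans hdb))
  have hmemory : memoryIntegral u a c (α - 1) =ᵐ[volume.restrict (Ioo c d)]
      fun _ => Real.Gamma α • -x a := by
    filter_upwards [ae_restrict_of_ae_restrict_of_subset
      (Ioo_subset_Icc_self.trans ((Icc_subset_Icc_left hac).trans had)) hxu,
      ae_restrict_mem measurableSet_Ioo] with t hxt ht
    simp only [div_eq_inv_mul, mul_smul, intervalIntegral.integral_smul] at hxt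
    rw [hx0 t (Ioo_subset_Icc_self ht), intervalIntegral_rpow_sub_smul_eq_memoryIntegral hac huac
      ht.1 (ae_restrict_of_ae_restrict_of_subset
        (Ioc_subset_Icc_self.trans (Icc_subset_Icc_right ht.2.le)) hu0)] at hxt
    rw [← inv_smul_eq_iff₀ hΓ]
    exact eq_neg_of_add_eq_zero_right hxt.symm
  have hu_ac := ae_eq_zero_of_memoryIntegral_ae_eq_const hac huac hcd
    (fun k => (by linarith [k.cast_nonneg (α := ℝ)] : α - 1 < k).ne) hmemory
  have hu_ad : ∀ᵐ s ∂volume.restrict (Icc a d), u s = 0 := by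
    rw [← Icc_union_Icc_eq_Icc hac hcd.le, ae_restrict_union_iff]
    exact ⟨hu_ac, hu0⟩
  have hx_const := eqOn_const_of_ae_eq_add_integral_smul (hac.trans_lt hcd) (hx.mono had) hu_ad
    (ae_restrict_of_ae_restrict_of_subset had hxu)
  intro t ht
  rw [hx_const ht, ← hx_const (right_mem_Icc.2 (hac.trans hcd.le)), hx0 d (right_mem_Icc.2 hcd.le)]

theorem stmt_9 (n : ℕ) (hn : 1 ≤ n) (a b : ℝ) (hab : a < b)
    (α : ℝ) (hα0 : 0 < α) (hα1 : α < 1)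
    (u : ℝ → EuclideanSpace ℝ (Fin n)) (hu : IntegrableOn u (Icc a b))
    (x : ℝ → EuclideanSpace ℝ (Fin n)) (hx : ContinuousOn x (Icc a b))
    (hxu : ∀ᵐ t ∂(volume.restrict (Icc a b)),
      x t = x a + ∫ s in a..t, ((t - s) ^ (α - 1) / Real.Gamma α) • u s)
    (c d : ℝ) (hac : a ≤ c) (hcd : c < d) (hdb : d ≤ b)
    (hx0 : ∀ t ∈ Icc c d, x t = 0)
    (hu0 : ∀ᵐ t ∂(volume.restrict (Icc c d)), u t = 0) :
    ∀ t ∈ Icc a d, x t = 0 :=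
  stmt_9_general n a b α hα0 hα1 u hu x hx hxu c d hac hcd hdb hx0 hu0
end

section
/- Let 0 < α < 1, let u ∈ L¹([a,b],ℝⁿ), and let x : [a,b] → ℝⁿ be a continuous function such that x(t) = x(a) + ∫_a^t ((t−s)^{α−1}/Γ(α)) u(s) ds for almost every t ∈ [a,b] (so u is the Caputo fractional derivative of order α of x). Suppose there exist real numbers a ≤ c < d ≤ b such that each component of x coincides on [c,d] with a polynomial function, and u(t) = 0 for almost every t ∈ [c,d]. Then x is constant on [a,d], i.e. x(t) = x(a) for all t ∈ [a,d]. -/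
/-!
For a.e. `t ∈ (c, d)`, since `u` vanishes on `[c, d]`, each component satisfies
`pᵢ(t) = xᵢ(a) + ∫_a^c (t - s)^(α-1) uᵢ(s) / Γ(α) ds`. The integral extends holomorphically to
the half-plane `re z > c`, so by the identity theorem the equation holds for every real `t > c`.
The integral tends to `0` as `t → ∞` while a nonconstant polynomial is unbounded, hence
`pᵢ = xᵢ(a)` and the holomorphic extension vanishes identically. Its derivatives at `t₀ = c + 1`
then show that all moments `∫_a^c (t₀ - s)^(-k) (t₀ - s)^(α-1) uᵢ(s) ds` vanish; as
`s ↦ (t₀ - s)⁻¹` is injective on `[a, c]`, Stone–Weierstrass forces `uᵢ = 0` a.e. on `[a, c]`.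
So `x = x(a)` a.e. on `[a, c]`, and everywhere there by continuity.
-/

open MeasureTheory Set Filter Topology Complex Polynomial

theorem exists_polynomial_near_comp_of_injOn {K : Set ℝ} (hK : IsCompact K) {φ ψ : ℝ → ℝ}
    (hφ : ContinuousOn φ K) (hinj : InjOn φ K) (hψ : ContinuousOn ψ K) {ε : ℝ} (hε : 0 < ε) :
    ∃ P : ℝ[X], ∀ s ∈ K, |ψ s - P.eval (φ s)| < ε := by
  have : CompactSpace K := isCompact_iff_compactSpace.mp hK
  let φK : C(K, ℝ) := ⟨K.domRestrict φ, hφ.domRestrict⟩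
  have hsep : (Algebra.adjoin ℝ {φK}).SeparatesPoints := fun y y' hyy' =>
    ⟨φK, ⟨φK, Algebra.subset_adjoin rfl, rfl⟩, fun h => hyy' (Subtype.ext (hinj y.2 y'.2 h))⟩
  obtain ⟨⟨g, hg⟩, hgψ⟩ := ContinuousMap.exists_mem_subalgebra_near_continuous_of_separatesPoints
    _ hsep (K.domRestrict ψ) hψ.domRestrict ε hε
  rw [Algebra.adjoin_singleton_eq_range_aeval] at hg
  obtain ⟨P, rfl⟩ := hg
  refine ⟨P, fun s hs => ?_⟩
  simpa [abs_sub_comm, aeval_continuousMap_apply, φK, Set.domRestrict] using hgψ ⟨s, hs⟩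

theorem ae_eq_zero_of_forall_integral_pow_mul_eq_zero {a c : ℝ} {φ g : ℝ → ℝ}
    (hφ : ContinuousOn φ (Icc a c)) (hinj : InjOn φ (Icc a c)) (hg : IntegrableOn g (Icc a c))
    (hmom : ∀ k : ℕ, ∫ s in Icc a c, φ s ^ k * g s = 0) :
    ∀ᵐ s ∂volume.restrict (Icc a c), g s = 0 := by
  have hint : ∀ {ψ : ℝ → ℝ}, ContinuousOn ψ (Icc a c) →
      IntegrableOn (fun s => ψ s * g s) (Icc a c) := fun hψ =>
    hg.continuousOn_mul hψ isCompact_Icc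
  have hpoly : ∀ P : ℝ[X], ∫ s in Icc a c, P.eval (φ s) * g s = 0 := by
    intro P
    simp_rw [eval_eq_sum_range, Finset.sum_mul, mul_assoc]
    rw [integral_finsetSum _ fun k _ => (hint (ψ := fun s => φ s ^ k) (hφ.pow k)).const_mul _]
    simp [integral_const_mul, hmom]
  refine ae_eq_zero_of_integral_contDiff_smul_eq_zero hg.locallyIntegrable fun ψ hψ _ => ?_
  have hψc : ContinuousOn ψ (Icc a c) := hψ.continuous.continuousOn
  have hle : ∀ ε > 0, |∫ s in Icc a c, ψ s * g s| ≤ ε * ∫ s in Icc a c, |g s| := by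
    intro ε hε
    obtain ⟨P, hP⟩ := exists_polynomial_near_comp_of_injOn isCompact_Icc hφ hinj hψc hε
    have hPc : ContinuousOn (fun s => P.eval (φ s)) (Icc a c) := P.continuous.comp_continuousOn hφ
    calc |∫ s in Icc a c, ψ s * g s|
        = ‖∫ s in Icc a c, (ψ s - P.eval (φ s)) * g s‖ := by
          simp_rw [sub_mul]
          rw [integral_sub (hint hψc) (hint hPc), hpoly, sub_zero, Real.norm_eq_abs]
      _ ≤ ∫ s in Icc a c, ε * |g s| := by
          refine norm_integral_le_of_norm_le (hg.abs.const_mul ε) ?_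
          filter_upwards [ae_restrict_mem measurableSet_Icc] with s hs
          rw [norm_mul, Real.norm_eq_abs, Real.norm_eq_abs]
          exact mul_le_mul_of_nonneg_right (hP s hs).le (abs_nonneg _)
      _ = ε * ∫ s in Icc a c, |g s| := integral_const_mul _ _
  have hlim : Tendsto (fun ε => ε * ∫ s in Icc a c, |g s|) (𝓝[>] 0) (𝓝 0) := by
    simpa using (tendsto_nhdsWithin_of_tendsto_nhds (tendsto_id (x := 𝓝 (0:ℝ)))).mul_const
      (∫ s in Icc a c, |g s|)
  simpa using ge_of_tendsto hlim (eventually_nhdsWithin_of_forall hle)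

theorem AnalyticOnNhd.eqOn_zero_of_eqOn_zero_Ioo {Φ : ℂ → ℂ} {U : Set ℂ}
    (hΦ : AnalyticOnNhd ℂ Φ U) (hU : IsPreconnected U) {c d : ℝ} (hcd : c < d)
    (hsub : ∀ t ∈ Ioo c d, (t : ℂ) ∈ U) (h : ∀ t ∈ Ioo c d, Φ t = 0) : EqOn Φ 0 U := by
  obtain ⟨m, hm⟩ := nonempty_Ioo.2 hcd
  refine hΦ.eqOn_zero_of_preconnected_of_frequently_eq_zero hU (hsub m hm) ?_
  have hreal : ∃ᶠ t : ℝ in 𝓝[≠] m, Φ t = 0 := (eventually_nhdsWithin_of_eventually_nhds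
    (eventually_of_mem (Ioo_mem_nhds hm.1 hm.2) h)).frequently
  have hmap : Tendsto ofReal (𝓝[≠] m) (𝓝[≠] (m : ℂ)) :=
    tendsto_nhdsWithin_of_tendsto_nhds_of_eventually_within _
      ((continuous_ofReal.tendsto m).mono_left nhdsWithin_le_nhds)
      (eventually_nhdsWithin_of_forall fun t ht => by simpa using ht)
  exact hmap.frequently hreal

theorem Polynomial.eq_C_of_tendsto_atTop {p : ℝ[X]} {L : ℝ}
    (h : Tendsto (fun t => p.eval t) atTop (𝓝 L)) : p = C L := by
  obtain ⟨hlead, hdeg⟩ := p.tendsto_nhds_iff.1 h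
  rw [eq_C_of_degree_le_zero hdeg, ← hlead, ← coeff_natDegree,
    natDegree_eq_zero_iff_degree_le_zero.2 hdeg]

noncomputable def kernelIntegral (a c γ : ℝ) (f : ℝ → ℝ) (z : ℂ) : ℂ :=
  ∫ s in Icc a c, (z - s) ^ (γ : ℂ) * f s

section
variable {a c γ s : ℝ} {f : ℝ → ℝ} {z : ℂ}

theorem sub_ofReal_mem_slitPlane (hz : c < z.re) (hs : s ≤ c) : z - s ∈ slitPlane :=
  mem_slitPlane_iff.mpr <| Or.inl <| by simp only [sub_re, ofReal_re]; linarith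

theorem norm_sub_ofReal_cpow_le (hz : c < z.re) (hs : s ≤ c) (hγ : γ ≤ 0) :
    ‖(z - s) ^ (γ : ℂ)‖ ≤ (z.re - c) ^ γ := by
  rw [norm_cpow_real]
  refine Real.rpow_le_rpow_of_nonpos (by linarith) ?_ hγ
  calc z.re - c ≤ (z - s).re := by simp only [sub_re, ofReal_re]; linarith
    _ ≤ ‖z - s‖ := re_le_norm _

theorem continuousOn_sub_ofReal_cpow (hz : c < z.re) :
    ContinuousOn (fun s : ℝ => (z - s) ^ (γ : ℂ)) (Iic c) :=
  (continuous_const.sub continuous_ofReal).continuousOn.cpow_const fun _ hs =>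
    sub_ofReal_mem_slitPlane hz hs

theorem integrableOn_sub_ofReal_cpow_mul (hf : IntegrableOn f (Icc a c)) (hz : c < z.re) :
    IntegrableOn (fun s : ℝ => (z - s) ^ (γ : ℂ) * f s) (Icc a c) :=
  IntegrableOn.continuousOn_mul ((continuousOn_sub_ofReal_cpow hz).mono Icc_subset_Iic_self)
    hf.ofReal isCompact_Icc

theorem kernelIntegral_ofReal {t : ℝ} (ht : c < t) :
    kernelIntegral a c γ f t = ((∫ s in Icc a c, (t - s) ^ γ * f s : ℝ) : ℂ) := by
  rw [kernelIntegral, ← integral_complex_ofReal]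
  refine setIntegral_congr_fun measurableSet_Icc fun s hs => ?_
  rw [ofReal_mul, ofReal_cpow (by linarith [hs.2]), ofReal_sub]

theorem norm_kernelIntegral_le (hf : IntegrableOn f (Icc a c)) (hγ : γ ≤ 0) (hz : c < z.re) :
    ‖kernelIntegral a c γ f z‖ ≤ (z.re - c) ^ γ * ∫ s in Icc a c, |f s| := by
  rw [← integral_const_mul]
  refine norm_integral_le_of_norm_le (hf.abs.const_mul _) ?_
  filter_upwards [ae_restrict_mem measurableSet_Icc] with s hs
  rw [norm_mul, norm_real, Real.norm_eq_abs]
  exact mul_le_mul_of_nonneg_right (norm_sub_ofReal_cpow_le hz hs.2 hγ) (abs_nonneg _)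

theorem tendsto_kernelIntegral_atTop (hf : IntegrableOn f (Icc a c)) (hγ : γ < 0) :
    Tendsto (fun t : ℝ => kernelIntegral a c γ f t) atTop (𝓝 0) := by
  refine squeeze_zero_norm' ((eventually_gt_atTop c).mono fun t ht =>
    norm_kernelIntegral_le hf hγ.le (by simpa using ht)) ?_
  simp only [ofReal_re]
  have hdecay := (tendsto_rpow_neg_atTop (neg_pos.2 hγ)).comp
    (tendsto_atTop_add_const_right _ (-c) tendsto_id)
  simpa [sub_eq_add_neg] using hdecay.mul_const (∫ s in Icc a c, |f s|)

theorem hasDerivAt_kernelIntegral (hf : IntegrableOn f (Icc a c)) (hγ : γ ≤ 0) (hz : c < z.re) :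
    HasDerivAt (kernelIntegral a c γ f) (γ * kernelIntegral a c (γ - 1) f z) z := by
  set ε := (z.re - c) / 2
  have hε : 0 < ε := by simp only [ε]; linarith
  have hball : ∀ w ∈ Metric.ball z ε, c + ε < w.re := fun w hw => by
    have := (abs_lt.1 ((abs_re_le_norm (w - z)).trans_lt (mem_ball_iff_norm.1 hw))).1
    simp only [sub_re, ε] at this ⊢
    linarith
  have hdom := hasDerivAt_integral_of_dominated_loc_of_deriv_le (μ := volume.restrict (Icc a c))
    (F := fun w s => (w - s) ^ (γ : ℂ) * (f s : ℂ))
    (F' := fun w s => γ * ((w - s) ^ ((γ - 1 : ℝ) : ℂ) * f s))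
    (bound := fun s => |γ| * ε ^ (γ - 1) * |f s|) (Metric.ball_mem_nhds z hε) ?_
    (integrableOn_sub_ofReal_cpow_mul hf hz)
    ((integrableOn_sub_ofReal_cpow_mul hf hz).const_mul _).aestronglyMeasurable ?_
    (hf.abs.const_mul _) ?_
  · have := hdom.2
    rw [integral_const_mul] at this
    exact this
  · filter_upwards [(isOpen_lt continuous_const continuous_re).mem_nhds hz] with w hw
    exact (integrableOn_sub_ofReal_cpow_mul hf hw).aestronglyMeasurable
  · filter_upwards [ae_restrict_mem measurableSet_Icc] with s hs w hw
    have hw' := hball w hw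
    rw [norm_mul, norm_mul, norm_real, norm_real, Real.norm_eq_abs, Real.norm_eq_abs, mul_assoc]
    gcongr
    calc ‖(w - s) ^ ((γ - 1 : ℝ) : ℂ)‖ ≤ (w.re - c) ^ (γ - 1) :=
          norm_sub_ofReal_cpow_le (by linarith) hs.2 (by linarith)
      _ ≤ ε ^ (γ - 1) := Real.rpow_le_rpow_of_nonpos hε (by linarith) (by linarith)
  · filter_upwards [ae_restrict_mem measurableSet_Icc] with s hs w hw
    have := (((hasDerivAt_id' w).sub_const (s : ℂ)).cpow_const (c := (γ : ℂ))
      (sub_ofReal_mem_slitPlane (by linarith [hball w hw]) hs.2)).mul_const (f s : ℂ)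
    exact this.congr_deriv (by push_cast; ring)

theorem differentiableOn_kernelIntegral (hf : IntegrableOn f (Icc a c)) (hγ : γ ≤ 0) :
    DifferentiableOn ℂ (kernelIntegral a c γ f) {z | c < z.re} := fun _ hz =>
  (hasDerivAt_kernelIntegral hf hγ hz).differentiableAt.differentiableWithinAt

theorem kernelIntegral_sub_natCast_eqOn_zero (hf : IntegrableOn f (Icc a c)) (hγ : γ < 0)
    (h : EqOn (kernelIntegral a c γ f) 0 {z | c < z.re}) (k : ℕ) :
    EqOn (kernelIntegral a c (γ - k) f) 0 {z | c < z.re} := by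
  induction k with
  | zero => simpa using h
  | succ k ih =>
    intro z hz
    have hγk : γ - k < 0 := by linarith [k.cast_nonneg (α := ℝ)]
    have hzero : deriv (kernelIntegral a c (γ - k) f) z = 0 := by
      have hnhds := (isOpen_lt continuous_const continuous_re).mem_nhds hz
      rw [(eventuallyEq_of_mem hnhds ih).deriv_eq, Pi.zero_def, deriv_const]
    rw [(hasDerivAt_kernelIntegral hf hγk.le hz).deriv] at hzero
    have hγk' : (γ : ℂ) - k ≠ 0 := by exact_mod_cast hγk.ne
    simpa [sub_sub, hγk'] using hzero

theorem ae_eq_zero_of_kernelIntegral_eqOn_zero (hf : IntegrableOn f (Icc a c)) (hγ : γ < 0)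
    (h : EqOn (kernelIntegral a c γ f) 0 {z | c < z.re}) :
    ∀ᵐ s ∂volume.restrict (Icc a c), f s = 0 := by
  set t₀ := c + 1
  have ht₀ : c < t₀ := by simp [t₀]
  have hpos : ∀ s ∈ Icc a c, 0 < t₀ - s := fun s hs => by linarith [hs.2]
  have hcont : ContinuousOn (fun s => t₀ - s) (Icc a c) := by fun_prop
  have hmom : ∀ k : ℕ, ∫ s in Icc a c, (t₀ - s)⁻¹ ^ k * ((t₀ - s) ^ γ * f s) = 0 := by
    intro k
    have hk := kernelIntegral_sub_natCast_eqOn_zero hf hγ h k (show c < (t₀ : ℂ).re by simpa)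
    rw [Pi.zero_apply, kernelIntegral_ofReal ht₀, ofReal_eq_zero] at hk
    rw [← hk]
    refine setIntegral_congr_fun measurableSet_Icc fun s hs => ?_
    rw [Real.rpow_sub_natCast (hpos s hs).ne', div_eq_mul_inv, inv_pow]
    ring
  have hg := ae_eq_zero_of_forall_integral_pow_mul_eq_zero
    (hcont.inv₀ fun s hs => (hpos s hs).ne')
    (fun s _ s' _ hss' => by simpa using inv_inj.mp hss')
    (IntegrableOn.continuousOn_mul (hcont.rpow_const fun s hs => .inl (hpos s hs).ne') hf
      isCompact_Icc) hmom
  filter_upwards [hg, ae_restrict_mem measurableSet_Icc] with s hs hsI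
  exact (mul_eq_zero.1 hs).resolve_left (Real.rpow_pos_of_pos (hpos s hsI) γ).ne'

end

theorem aeval_eq_add_kernelIntegral_of_ae {a c d β L : ℝ} {f : ℝ → ℝ} {p : ℝ[X]}
    (hcd : c < d) (hf : IntegrableOn f (Icc a c)) (hβ : β ≤ 0)
    (h : ∀ᵐ t ∂volume.restrict (Ioo c d), p.eval t = L + ∫ s in Icc a c, (t - s) ^ β * f s)
    {z : ℂ} (hz : c < z.re) : aeval z p = L + kernelIntegral a c β f z := by
  set U : Set ℂ := {z | c < z.re}
  set Φ : ℂ → ℂ := fun z => aeval z p - (L + kernelIntegral a c β f z)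
  have hΦ : AnalyticOnNhd ℂ Φ U :=
    (p.differentiable_aeval.differentiableOn.sub
      ((differentiableOn_kernelIntegral hf hβ).const_add _)).analyticOnNhd
      (isOpen_lt continuous_const continuous_re)
  have hcont : ContinuousOn (fun t : ℝ => Φ t) (Ioo c d) :=
    hΦ.continuousOn.comp continuous_ofReal.continuousOn fun t ht => by simpa [U] using ht.1
  have hΦreal : ∀ t ∈ Ioo c d, Φ t = 0 := by
    refine Measure.eqOn_open_of_ae_eq (μ := volume) ?_ isOpen_Ioo hcont continuousOn_const
    filter_upwards [h, ae_restrict_mem measurableSet_Ioo] with t ht htI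
    have hpt : aeval (t : ℂ) p = ((p.eval t : ℝ) : ℂ) := aeval_ofReal p t
    simp only [Φ]
    rw [hpt, kernelIntegral_ofReal htI.1, ht]
    push_cast
    ring
  have hΦ0 := hΦ.eqOn_zero_of_eqOn_zero_Ioo (convex_halfSpace_re_gt c).isPreconnected hcd
    (fun t ht => by simpa [U] using ht.1) hΦreal
  exact sub_eq_zero.1 (hΦ0 hz)

theorem eq_C_and_ae_eq_zero_of_ae_eval_eq_add_integral {a c d β L : ℝ} {f : ℝ → ℝ} {p : ℝ[X]}
    (hcd : c < d) (hf : IntegrableOn f (Icc a c)) (hβ : β < 0)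
    (h : ∀ᵐ t ∂volume.restrict (Ioo c d), p.eval t = L + ∫ s in Icc a c, (t - s) ^ β * f s) :
    p = C L ∧ ∀ᵐ s ∂volume.restrict (Icc a c), f s = 0 := by
  have hext : ∀ {z : ℂ}, c < z.re → aeval z p = L + kernelIntegral a c β f z :=
    aeval_eq_add_kernelIntegral_of_ae hcd hf hβ.le h
  have hp : p = C L := by
    refine eq_C_of_tendsto_atTop ?_
    have hev : (fun t : ℝ => (L : ℂ) + kernelIntegral a c β f t) =ᶠ[atTop]
        fun t => ((p.eval t : ℝ) : ℂ) := (eventually_gt_atTop c).mono fun t ht => by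
      exact (hext (by simpa using ht)).symm.trans (aeval_ofReal p t)
    have := ((tendsto_kernelIntegral_atTop hf hβ).const_add (L : ℂ)).congr' hev
    simpa [Function.comp_def] using (continuous_re.tendsto _).comp this
  refine ⟨hp, ae_eq_zero_of_kernelIntegral_eqOn_zero hf hβ fun z hz => ?_⟩
  simpa [hp] using hext hz

theorem EuclideanSpace.integral_apply {ι X : Type*} [Fintype ι] [MeasurableSpace X]
    {μ : Measure X} {f : X → EuclideanSpace ℝ ι} (hf : Integrable f μ) (i : ι) :
    (∫ x, f x ∂μ) i = ∫ x, f x i ∂μ :=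
  ((EuclideanSpace.proj i).integral_comp_comm hf).symm

section
variable {E : Type*} [NormedAddCommGroup E] [NormedSpace ℝ E]

theorem intervalIntegral_eq_setIntegral_Icc_of_ae_eq_zero {F : ℝ → E} {a c t : ℝ} (hac : a ≤ c)
    (hct : c ≤ t) (hF : IntegrableOn F (Icc a c)) (h0 : ∀ᵐ s ∂volume.restrict (Ioc c t), F s = 0) :
    ∫ s in a..t, F s = ∫ s in Icc a c, F s := by
  have hFct : IntervalIntegrable F volume c t :=
    (intervalIntegrable_iff_integrableOn_Ioc_of_le hct).2
      (integrableOn_zero.congr_fun_ae (h0.mono fun _ hs => hs.symm))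
  rw [← intervalIntegral.integral_add_adjacent_intervals
      ((intervalIntegrable_iff_integrableOn_Icc_of_le hac).2 hF) hFct,
    intervalIntegral.integral_of_le hct, integral_eq_zero_of_ae h0, add_zero,
    intervalIntegral.integral_of_le hac, integral_Icc_eq_integral_Ioc]

variable {x u : ℝ → E} {k : ℝ → ℝ → ℝ} {a b c : ℝ}

theorem ae_eq_add_setIntegral_of_ae_eq_zero {d : ℝ} (hac : a ≤ c) (hdb : d ≤ b)
    (hu : IntegrableOn u (Icc a c)) (hk : ∀ t ∈ Ioo c d, ContinuousOn (k t) (Icc a c))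
    (hxu : ∀ᵐ t ∂volume.restrict (Icc a b), x t = x a + ∫ s in a..t, k t s • u s)
    (hu0 : ∀ᵐ s ∂volume.restrict (Icc c d), u s = 0) :
    ∀ᵐ t ∂volume.restrict (Ioo c d), x t = x a + ∫ s in Icc a c, k t s • u s := by
  have hu0' := (ae_restrict_iff' measurableSet_Icc).1 hu0
  filter_upwards [ae_restrict_of_ae_restrict_of_subset
      (Ioo_subset_Icc_self.trans (Icc_subset_Icc hac hdb)) hxu,
    ae_restrict_mem measurableSet_Ioo] with t ht htI
  rw [ht, intervalIntegral_eq_setIntegral_Icc_of_ae_eq_zero hac htI.1.le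
    (hu.continuousOn_smul (hk t htI) isCompact_Icc)]
  rw [ae_restrict_iff' measurableSet_Ioc]
  filter_upwards [hu0'] with s hs hsI
  rw [hs ⟨hsI.1.le, hsI.2.trans htI.2.le⟩, smul_zero]

theorem eqOn_Icc_of_ae_eq_zero (hcb : c ≤ b) (hx : ContinuousOn x (Icc a b))
    (hxu : ∀ᵐ t ∂volume.restrict (Icc a b), x t = x a + ∫ s in a..t, k t s • u s)
    (hu0 : ∀ᵐ s ∂volume.restrict (Icc a c), u s = 0) : EqOn x (fun _ => x a) (Icc a c) := by
  have hae : ∀ᵐ t ∂volume.restrict (Icc a c), x t = x a := by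
    filter_upwards [ae_restrict_of_ae_restrict_of_subset (Icc_subset_Icc_right hcb) hxu,
      ae_restrict_mem measurableSet_Icc] with t ht htI
    rw [ht, add_eq_left]
    refine intervalIntegral.integral_zero_ae ?_
    filter_upwards [(ae_restrict_iff' measurableSet_Icc).1 hu0] with s hs hsI
    rw [uIoc_of_le htI.1] at hsI
    rw [hs ⟨hsI.1.le, hsI.2.trans htI.2⟩, smul_zero]
  rcases eq_or_ne a c with rfl | hne
  · intro t ht
    rw [Icc_self, mem_singleton_iff] at ht
    rw [ht]
  · exact Measure.eqOn_Icc_of_ae_eq volume hne hae (hx.mono (Icc_subset_Icc_right hcb))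
      continuousOn_const

end

theorem continuousOn_sub_rpow {t β : ℝ} {S : Set ℝ} (h : ∀ s ∈ S, s < t) :
    ContinuousOn (fun s => (t - s) ^ β) S :=
  ContinuousOn.rpow_const (f := fun s => t - s) (by fun_prop) fun s hs =>
    .inl (sub_pos.2 (h s hs)).ne'

theorem coord_eqOn_const_and_ae_eq_zero {ι : Type*} [Fintype ι] {a c d α : ℝ} (hα0 : 0 < α)
    (hα1 : α < 1) (hcd : c < d) {x u : ℝ → EuclideanSpace ℝ ι} (hu : IntegrableOn u (Icc a c))
    (htail : ∀ᵐ t ∂volume.restrict (Ioo c d),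
      x t = x a + ∫ s in Icc a c, ((t - s) ^ (α - 1) / Real.Gamma α) • u s)
    {i : ι} {p : ℝ[X]} (hp : ∀ t ∈ Icc c d, x t i = p.eval t) :
    (∀ t ∈ Icc c d, x t i = x a i) ∧ ∀ᵐ s ∂volume.restrict (Icc a c), u s i = 0 := by
  have hae : ∀ᵐ t ∂volume.restrict (Ioo c d),
      p.eval t = x a i + ∫ s in Icc a c, (t - s) ^ (α - 1) * (u s i / Real.Gamma α) := by
    filter_upwards [htail, ae_restrict_mem measurableSet_Ioo] with t ht htI
    have hk : ContinuousOn (fun s => (t - s) ^ (α - 1) / Real.Gamma α) (Icc a c) :=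
      (continuousOn_sub_rpow fun s hs => hs.2.trans_lt htI.1).div_const _
    rw [← hp t (Ioo_subset_Icc_self htI), ht, PiLp.add_apply,
      EuclideanSpace.integral_apply (hu.continuousOn_smul hk isCompact_Icc)]
    simp only [PiLp.smul_apply, smul_eq_mul, div_mul_eq_mul_div, mul_div_assoc]
  obtain ⟨hpC, hui⟩ := eq_C_and_ae_eq_zero_of_ae_eval_eq_add_integral hcd
    (((EuclideanSpace.proj (𝕜 := ℝ) i).integrable_comp hu).div_const _) (by linarith) hae
  refine ⟨fun t ht => by rw [hp t ht, hpC, eval_C], ?_⟩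
  filter_upwards [hui] with s hs
  exact (div_eq_zero_iff.1 hs).resolve_right (Real.Gamma_pos_of_pos hα0).ne'

theorem stmt_10_general (n : ℕ) (a b : ℝ)
    (α : ℝ) (hα0 : 0 < α) (hα1 : α < 1)
    (u : ℝ → EuclideanSpace ℝ (Fin n)) (hu : IntegrableOn u (Icc a b))
    (x : ℝ → EuclideanSpace ℝ (Fin n)) (hx : ContinuousOn x (Icc a b))
    (hxu : ∀ᵐ t ∂(volume.restrict (Icc a b)),
      x t = x a + ∫ s in a..t, ((t - s) ^ (α - 1) / Real.Gamma α) • u s)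
    (c d : ℝ) (hac : a ≤ c) (hcd : c < d) (hdb : d ≤ b)
    (hpoly : ∀ i : Fin n, ∃ p : Polynomial ℝ, ∀ t ∈ Icc c d, x t i = Polynomial.eval t p)
    (hu0 : ∀ᵐ t ∂(volume.restrict (Icc c d)), u t = 0) :
    ∀ t ∈ Icc a d, x t = x a := by
  have hcb : c ≤ b := hcd.le.trans hdb
  have hu' : IntegrableOn u (Icc a c) := hu.mono_set (Icc_subset_Icc_right hcb)
  have htail := ae_eq_add_setIntegral_of_ae_eq_zero hac hdb hu'
    (fun t ht => (continuousOn_sub_rpow fun s (hs : s ∈ Icc a c) => hs.2.trans_lt ht.1).div_const _)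
    hxu hu0
  have hcoord : ∀ i, (∀ t ∈ Icc c d, x t i = x a i) ∧
      ∀ᵐ s ∂volume.restrict (Icc a c), u s i = 0 := fun i =>
    coord_eqOn_const_and_ae_eq_zero hα0 hα1 hcd hu' htail (hpoly i).choose_spec
  have hu0' : ∀ᵐ s ∂volume.restrict (Icc a c), u s = 0 :=
    (ae_all_iff.2 fun i => (hcoord i).2).mono fun s hs => by ext i; exact hs i
  intro t ht
  rcases le_total t c with htc | hct
  · exact eqOn_Icc_of_ae_eq_zero hcb hx hxu hu0' ⟨ht.1, htc⟩
  · ext i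
    exact (hcoord i).1 t ⟨hct, ht.2⟩

theorem stmt_10 (n : ℕ) (hn : 1 ≤ n) (a b : ℝ) (hab : a < b)
    (α : ℝ) (hα0 : 0 < α) (hα1 : α < 1)
    (u : ℝ → EuclideanSpace ℝ (Fin n)) (hu : IntegrableOn u (Icc a b))
    (x : ℝ → EuclideanSpace ℝ (Fin n)) (hx : ContinuousOn x (Icc a b))
    (hxu : ∀ᵐ t ∂(volume.restrict (Icc a b)),
      x t = x a + ∫ s in a..t, ((t - s) ^ (α - 1) / Real.Gamma α) • u s)
    (c d : ℝ) (hac : a ≤ c) (hcd : c < d) (hdb : d ≤ b)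
    (hpoly : ∀ i : Fin n, ∃ p : Polynomial ℝ, ∀ t ∈ Icc c d, x t i = Polynomial.eval t p)
    (hu0 : ∀ᵐ t ∂(volume.restrict (Icc c d)), u t = 0) :
    ∀ t ∈ Icc a d, x t = x a :=
  stmt_10_general n a b α hα0 hα1 u hu x hx hxu c d hac hcd hdb hpoly hu0
end

section
/- Let a < c be real numbers, let u ∈ L¹([a,c],ℝ), and let μ be a real number that is not a natural number. Define Ψ : (c,∞) → ℝ by Ψ(t) := ∫_a^c (t−s)^μ u(s) ds. If there exist real numbers c < c₁ < c₂ and a polynomial function p : ℝ → ℝ such that Ψ(t) = p(t) for all t ∈ [c₁,c₂], then u(s) = 0 for almost every s ∈ [a,c]. -/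
/-!
Differentiating under the integral sign, the `k`-th derivative of
`Ψ(t) = ∫_a^c (t - s)^μ u(s) ds` is `μ (μ - 1) ⋯ (μ - k + 1) ∫_a^c (t - s)^(μ - k) u(s) ds`.
Where `Ψ` is a polynomial these derivatives vanish for large `k`, and since `μ ∉ ℕ` the falling
factorial does not, so for a fixed `t₀ > c` and `N > deg p` the function
`w(s) = (t₀ - s)^(μ - N) u(s)` has all moments against `(t₀ - s)⁻¹` equal to zero. By Weierstrass
approximation `w` then integrates to zero against every continuous function of `(t₀ - s)⁻¹`,
hence against every continuous function of `s`, which forces `w = 0`, and so `u = 0`, almost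
everywhere.
-/

open MeasureTheory Set Filter Topology Polynomial

noncomputable def powerPotential (u : ℝ → ℝ) (a c ν t : ℝ) : ℝ :=
  ∫ s in Icc a c, (t - s) ^ ν * u s

lemma Real.rpow_le_max_rpow_of_mem_Icc {lo hi r : ℝ} (hlo : 0 < lo) (hr : r ∈ Icc lo hi)
    (e : ℝ) : r ^ e ≤ max (lo ^ e) (hi ^ e) := by
  rcases le_or_gt 0 e with he | he
  · exact le_max_of_le_right (Real.rpow_le_rpow (hlo.le.trans hr.1) hr.2 he)
  · exact le_max_of_le_left (Real.rpow_le_rpow_of_nonpos hlo hr.1 he.le)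

lemma iteratedDeriv_polynomial_eval {𝕜 : Type*} [NontriviallyNormedField 𝕜] (k : ℕ)
    (p : 𝕜[X]) : iteratedDeriv k (fun x => p.eval x) = fun x => (derivative^[k] p).eval x := by
  induction k generalizing p with
  | zero => rfl
  | succ k ih =>
    rw [iteratedDeriv_succ', show deriv (fun x => p.eval x) = fun x => p.derivative.eval x from
      funext fun _ => p.deriv, ih, Function.iterate_succ_apply]

section PowerPotential

variable {u : ℝ → ℝ} {a c t : ℝ}

lemma integrableOn_rpow_sub_mul (hu : IntegrableOn u (Icc a c)) (ht : c < t) (ν : ℝ) :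
    IntegrableOn (fun s => (t - s) ^ ν * u s) (Icc a c) := by
  refine IntegrableOn.continuousOn_mul ?_ hu isCompact_Icc
  exact (continuousOn_const.sub continuousOn_id).rpow_const fun s hs =>
    Or.inl (sub_pos.2 (hs.2.trans_lt ht)).ne'

lemma hasDerivAt_powerPotential (hu : IntegrableOn u (Icc a c)) (ht : c < t) (ν : ℝ) :
    HasDerivAt (powerPotential u a c ν) (ν * powerPotential u a c (ν - 1) t) t := by
  set ε := (t - c) / 2 with hε_def
  have hε : 0 < ε := by linarith [hε_def]
  have hgap : ∀ s ∈ Icc a c, ∀ x ∈ Metric.ball t ε, x - s ∈ Icc ε (t + ε - a) := by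
    intro s hs x hx
    rw [Metric.mem_ball, Real.dist_eq, abs_lt] at hx
    constructor <;> linarith [hs.1, hs.2, hε_def]
  have hdom := hasDerivAt_integral_of_dominated_loc_of_deriv_le
    (μ := volume.restrict (Icc a c)) (x₀ := t) (Metric.ball_mem_nhds t hε)
    (F := fun x s => (x - s) ^ ν * u s) (F' := fun x s => ν * ((x - s) ^ (ν - 1) * u s))
    (bound := fun s => |ν| * max (ε ^ (ν - 1)) ((t + ε - a) ^ (ν - 1)) * ‖u s‖)
    (eventually_of_mem (Ioi_mem_nhds ht) fun x hx =>
      (integrableOn_rpow_sub_mul hu hx ν).aestronglyMeasurable)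
    (integrableOn_rpow_sub_mul hu ht ν)
    (((integrableOn_rpow_sub_mul hu ht (ν - 1)).const_mul ν).aestronglyMeasurable)
    (ae_restrict_of_forall_mem measurableSet_Icc fun s hs x hx => ?bound)
    (hu.norm.const_mul _)
    (ae_restrict_of_forall_mem measurableSet_Icc fun s hs x hx => ?deriv)
  · rw [powerPotential, ← integral_const_mul]
    exact hdom.2
  case bound =>
    have hpos : 0 < x - s := hε.trans_le (hgap s hs x hx).1
    rw [norm_mul, norm_mul, Real.norm_eq_abs, Real.norm_eq_abs,
      abs_of_pos (Real.rpow_pos_of_pos hpos _), ← mul_assoc]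
    gcongr
    exact Real.rpow_le_max_rpow_of_mem_Icc hε (hgap s hs x hx) _
  case deriv =>
    have hpos : 0 < x - s := hε.trans_le (hgap s hs x hx).1
    refine ((((hasDerivAt_id x).sub_const s).rpow_const (p := ν) (Or.inl hpos.ne')).mul_const
      (u s)).congr_deriv ?_
    simp only [id]
    ring

lemma iteratedDeriv_powerPotential (hu : IntegrableOn u (Icc a c)) (k : ℕ) (ht : c < t)
    (ν : ℝ) : iteratedDeriv k (powerPotential u a c ν) t =
      (∏ j ∈ Finset.range k, (ν - j)) * powerPotential u a c (ν - k) t := by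
  induction k generalizing t with
  | zero => simp only [iteratedDeriv_zero, Finset.prod_range_zero, Nat.cast_zero, sub_zero, one_mul]
  | succ k ih =>
    have hloc : iteratedDeriv k (powerPotential u a c ν) =ᶠ[𝓝 t]
        fun x => (∏ j ∈ Finset.range k, (ν - j)) * powerPotential u a c (ν - k) x :=
      eventually_of_mem (Ioi_mem_nhds ht) fun x hx => ih hx
    rw [iteratedDeriv_succ, hloc.deriv_eq,
      ((hasDerivAt_powerPotential hu ht (ν - k)).const_mul _).deriv, Finset.prod_range_succ]
    push_cast
    ring_nf

end PowerPotential

lemma setIntegral_comp_mul_eq_zero_of_forall_pow {X : Type*} [TopologicalSpace X] [T2Space X]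
    [MeasurableSpace X] [OpensMeasurableSpace X] {μ : Measure X} {K : Set X} (hK : IsCompact K)
    {φ w : X → ℝ} {α β : ℝ} (hφ : ContinuousOn φ K) (hφK : MapsTo φ K (Icc α β))
    (hw : IntegrableOn w K μ) (hmom : ∀ n : ℕ, ∫ x in K, φ x ^ n * w x ∂μ = 0)
    {G : ℝ → ℝ} (hG : ContinuousOn G (Icc α β)) : ∫ x in K, G (φ x) * w x ∂μ = 0 := by
  have hint : ∀ H : ℝ → ℝ, ContinuousOn H (Icc α β) →
      IntegrableOn (fun x => H (φ x) * w x) K μ := fun H hH =>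
    IntegrableOn.continuousOn_mul (hH.comp hφ hφK) hw hK
  have hpoly : ∀ q : ℝ[X], ∫ x in K, q.eval (φ x) * w x ∂μ = 0 := by
    intro q
    simp only [eval_eq_sum_range, Finset.sum_mul, mul_assoc]
    rw [integral_finsetSum _ fun i _ => (hint _ (continuousOn_pow i)).const_mul _]
    simp [integral_const_mul, hmom]
  set I := ∫ x in K, ‖w x‖ ∂μ
  refine abs_eq_zero.1 (le_antisymm (le_of_forall_pos_le_add fun ε hε => ?_) (abs_nonneg _))
  have hε' : 0 < ε / (I + 1) := div_pos hε (by positivity)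
  obtain ⟨q, hq⟩ := exists_polynomial_near_of_continuousOn α β G hG _ hε'
  have hsub : ∫ x in K, G (φ x) * w x ∂μ = ∫ x in K, (G (φ x) - q.eval (φ x)) * w x ∂μ := by
    simp only [sub_mul]
    rw [integral_sub (hint G hG) (hint _ q.continuousOn), hpoly, sub_zero]
  have hbound : ‖∫ x in K, (G (φ x) - q.eval (φ x)) * w x ∂μ‖ ≤ ε / (I + 1) * I := by
    rw [← integral_const_mul]
    refine norm_integral_le_of_norm_le (hw.norm.const_mul _) ?_
    filter_upwards [ae_restrict_mem₀ hK.measurableSet.nullMeasurableSet] with x hx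
    rw [norm_mul, Real.norm_eq_abs, abs_sub_comm]
    gcongr
    exact (hq _ (hφK hx)).le
  have hI : ε / (I + 1) * I ≤ ε := by
    rw [div_mul_eq_mul_div, div_le_iff₀ (by positivity)]
    nlinarith
  rw [hsub, zero_add, ← Real.norm_eq_abs]
  exact hbound.trans hI

lemma ae_eq_zero_of_forall_integral_inv_sub_pow_mul {a c t₀ : ℝ} (hac : a ≤ c) (ht₀ : c < t₀)
    {w : ℝ → ℝ} (hw : IntegrableOn w (Icc a c))
    (hmom : ∀ n : ℕ, ∫ s in Icc a c, (t₀ - s)⁻¹ ^ n * w s = 0) :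
    ∀ᵐ s ∂volume.restrict (Icc a c), w s = 0 := by
  have hα : 0 < (t₀ - a)⁻¹ := inv_pos.2 (by linarith)
  have hφ : MapsTo (fun s => (t₀ - s)⁻¹) (Icc a c) (Icc (t₀ - a)⁻¹ (t₀ - c)⁻¹) := by
    intro s hs
    exact ⟨inv_anti₀ (by linarith [hs.2]) (by linarith [hs.1]),
      inv_anti₀ (by linarith) (by linarith [hs.2])⟩
  refine ae_eq_zero_of_integral_contDiff_smul_eq_zero (Integrable.locallyIntegrable hw)
    fun g hg _ => ?_
  -- `g` is a continuous function of `x = (t₀ - s)⁻¹`, namely `g (t₀ - x⁻¹)`.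
  have hG : ContinuousOn (fun x => g (t₀ - x⁻¹)) (Icc (t₀ - a)⁻¹ (t₀ - c)⁻¹) :=
    hg.continuous.comp_continuousOn (continuousOn_const.sub
      (continuousOn_inv₀.mono fun x hx => (hα.trans_le hx.1).ne'))
  have hφc : ContinuousOn (fun s => (t₀ - s)⁻¹) (Icc a c) :=
    (continuousOn_const.sub continuousOn_id).inv₀ fun s hs => (sub_pos.2 (hs.2.trans_lt ht₀)).ne'
  rw [← setIntegral_comp_mul_eq_zero_of_forall_pow isCompact_Icc hφc hφ hw hmom hG]
  simp only [inv_inv, sub_sub_cancel, smul_eq_mul]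

theorem stmt_12 (a c : ℝ) (hac : a < c) (u : ℝ → ℝ)
    (hu : IntegrableOn u (Set.Icc a c))
    (μ : ℝ) (hμ : ∀ k : ℕ, μ ≠ (k : ℝ))
    (c₁ c₂ : ℝ) (h1 : c < c₁) (h2 : c₁ < c₂) (p : Polynomial ℝ)
    (hp : ∀ t ∈ Set.Icc c₁ c₂, (∫ s in a..c, (t - s) ^ μ * u s) = Polynomial.eval t p) :
    ∀ᵐ s ∂(volume.restrict (Set.Icc a c)), u s = 0 := by
  obtain ⟨t₀, ht₀⟩ := nonempty_Ioo.2 h2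
  have hct₀ : c < t₀ := h1.trans ht₀.1
  have hΨ : powerPotential u a c μ =ᶠ[𝓝 t₀] fun t => p.eval t := by
    filter_upwards [Ioo_mem_nhds ht₀.1 ht₀.2] with t ht
    rw [← hp t (Ioo_subset_Icc_self ht), intervalIntegral.integral_of_le hac.le, powerPotential,
      integral_Icc_eq_integral_Ioc]
  have hvanish : ∀ k, p.natDegree < k → powerPotential u a c (μ - k) t₀ = 0 := by
    intro k hk
    have hderiv := iteratedDeriv_powerPotential hu k hct₀ μ
    rw [hΨ.iteratedDeriv_eq, iteratedDeriv_polynomial_eval, iterate_derivative_eq_zero hk]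
      at hderiv
    simp only [eval_zero] at hderiv
    exact (mul_eq_zero.1 hderiv.symm).resolve_left
      (Finset.prod_ne_zero_iff.2 fun j _ => sub_ne_zero.2 (hμ j))
  set N := p.natDegree + 1
  have hw : ∀ᵐ s ∂volume.restrict (Icc a c), (t₀ - s) ^ (μ - N) * u s = 0 := by
    refine ae_eq_zero_of_forall_integral_inv_sub_pow_mul hac.le hct₀
      (integrableOn_rpow_sub_mul hu hct₀ _) fun n => ?_
    rw [← hvanish (N + n) (by omega)]
    refine setIntegral_congr_fun measurableSet_Icc fun s hs => ?_
    have hpos : 0 < t₀ - s := by linarith [hs.2]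
    rw [inv_pow, ← mul_assoc, inv_mul_eq_div, ← Real.rpow_sub_natCast hpos.ne']
    push_cast
    ring_nf
  filter_upwards [hw, ae_restrict_mem measurableSet_Icc] with s hs hmem
  exact (mul_eq_zero.1 hs).resolve_left (Real.rpow_pos_of_pos (by linarith [hmem.2]) _).ne'
end
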